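/- arXiv:cs/0702158 — 8 statements merged into one kernel-verified Lean document; each statement's English description precedes it below -/
import Mathlib

section
/- Let ζ ∈ [0,1] and let (ε, δ) ∈ [0,1]² with 1 - δ ≥ ε (the detection probability is at least the false-alarm probability). Consider maximizing G(f₀, f₁) = ε·f₀ + (1-ε)·f₁ over (f₀, f₁) ∈ [0,1]² subject to (1-δ)·f₀ + δ·f₁ ≤ ζ. Then the maximum is attained at: (f₀*, f₁*) = ((ζ-δ)/(1-δ), 1) if δ < ζ; (0, 1) if δ = ζ; and (0, ζ/δ) if δ > ζ. -/
/-!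
The problem is a linear program, and each candidate optimum comes with a dual certificate.
If `δ ≤ ζ` and `δ < 1`, the throughput decomposes as
`G = ε/(1-δ) · C + (1-ε-δ)/(1-δ) · f₁` with `C` the collision probability; both multipliers
are nonnegative because `ε ≤ 1 - δ`, so `C ≤ ζ` and `f₁ ≤ 1` bound `G`, with equality at
`((ζ-δ)/(1-δ), 1)`. If `ζ ≤ δ` and `0 < δ`, instead `G = (1-ε)/δ · C + (ε+δ-1)/δ · f₀` with a
nonpositive second multiplier, so `G ≤ (1-ε) ζ/δ`, attained at `(0, ζ/δ)`. When `δ = ζ`, the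
point `(0, 1)` is an instance of one of these two regimes.
-/

open Set

def IsOptimalAccess (ε δ ζ : ℝ) (f : ℝ × ℝ) : Prop :=
  (f.1 ∈ Icc (0:ℝ) 1 ∧ f.2 ∈ Icc (0:ℝ) 1 ∧ (1 - δ) * f.1 + δ * f.2 ≤ ζ) ∧
    ∀ f₀ f₁ : ℝ, f₀ ∈ Icc (0:ℝ) 1 → f₁ ∈ Icc (0:ℝ) 1 → (1 - δ) * f₀ + δ * f₁ ≤ ζ →
      ε * f₀ + (1 - ε) * f₁ ≤ ε * f.1 + (1 - ε) * f.2

section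

variable {ε δ ζ f₀ f₁ : ℝ}

theorem throughput_le_of_le_collision_of_lt_one (hε : 0 ≤ ε) (hδ : δ < 1) (hroc : ε ≤ 1 - δ)
    (hf₁ : f₁ ≤ 1) (hC : (1 - δ) * f₀ + δ * f₁ ≤ ζ) :
    ε * f₀ + (1 - ε) * f₁ ≤ ε * ((ζ - δ) / (1 - δ)) + (1 - ε) * 1 := by
  have hδ' : 1 - δ ≠ 0 := by linarith
  have hcoll : 0 ≤ ε / (1 - δ) := div_nonneg hε (by linarith)
  have hidle : 0 ≤ (1 - ε - δ) / (1 - δ) := div_nonneg (by linarith) (by linarith)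
  calc ε * f₀ + (1 - ε) * f₁
      = ε / (1 - δ) * ((1 - δ) * f₀ + δ * f₁) + (1 - ε - δ) / (1 - δ) * f₁ := by
        field_simp; ring
    _ ≤ ε / (1 - δ) * ζ + (1 - ε - δ) / (1 - δ) * 1 := by gcongr
    _ = ε * ((ζ - δ) / (1 - δ)) + (1 - ε) * 1 := by field_simp; ring

theorem throughput_le_of_le_collision_of_pos (hδ : 0 < δ) (hroc : ε ≤ 1 - δ)
    (hf₀ : 0 ≤ f₀) (hC : (1 - δ) * f₀ + δ * f₁ ≤ ζ) :
    ε * f₀ + (1 - ε) * f₁ ≤ ε * 0 + (1 - ε) * (ζ / δ) := by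
  have hcoll : 0 ≤ (1 - ε) / δ := div_nonneg (by linarith) hδ.le
  have hbusy : (ε + δ - 1) / δ * f₀ ≤ 0 :=
    mul_nonpos_of_nonpos_of_nonneg (div_nonpos_of_nonpos_of_nonneg (by linarith) hδ.le) hf₀
  calc ε * f₀ + (1 - ε) * f₁
      = (1 - ε) / δ * ((1 - δ) * f₀ + δ * f₁) + (ε + δ - 1) / δ * f₀ := by
        field_simp; ring
    _ ≤ (1 - ε) / δ * ζ := by linarith [mul_le_mul_of_nonneg_left hC hcoll]
    _ = ε * 0 + (1 - ε) * (ζ / δ) := by ring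

theorem isOptimalAccess_of_le_of_lt_one (hε : 0 ≤ ε) (hδ : δ < 1) (hroc : ε ≤ 1 - δ)
    (hδζ : δ ≤ ζ) (hζ : ζ ≤ 1) : IsOptimalAccess ε δ ζ ((ζ - δ) / (1 - δ), 1) := by
  have hpos : 0 < 1 - δ := by linarith
  refine ⟨⟨⟨div_nonneg (by linarith) hpos.le, (div_le_one hpos).2 (by linarith)⟩,
    right_mem_Icc.2 zero_le_one, ?_⟩, fun f₀ f₁ _ hf₁ hC ↦
      throughput_le_of_le_collision_of_lt_one hε hδ hroc hf₁.2 hC⟩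
  rw [mul_div_cancel₀ _ hpos.ne']
  linarith

theorem isOptimalAccess_of_le_of_pos (hδ : 0 < δ) (hroc : ε ≤ 1 - δ)
    (hζδ : ζ ≤ δ) (hζ : 0 ≤ ζ) : IsOptimalAccess ε δ ζ (0, ζ / δ) := by
  refine ⟨⟨left_mem_Icc.2 zero_le_one, ⟨div_nonneg hζ hδ.le, (div_le_one hδ).2 hζδ⟩, ?_⟩,
    fun f₀ f₁ hf₀ _ hC ↦ throughput_le_of_le_collision_of_pos hδ hroc hf₀.1 hC⟩
  rw [mul_div_cancel₀ _ hδ.ne']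
  linarith

end

theorem optimalAccess_cases {δ ζ : ℝ} (hζ : ζ ∈ Icc (0:ℝ) 1) :
    ((if δ < ζ then ((ζ - δ) / (1 - δ), 1) else if δ = ζ then (0, 1) else (0, ζ / δ)) =
        ((ζ - δ) / (1 - δ), (1:ℝ)) ∧ δ < 1 ∧ δ ≤ ζ) ∨
      ((if δ < ζ then ((ζ - δ) / (1 - δ), 1) else if δ = ζ then (0, 1) else (0, ζ / δ)) =
        ((0:ℝ), ζ / δ) ∧ 0 < δ ∧ ζ ≤ δ) := by
  obtain ⟨hζ0, hζ1⟩ := hζ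
  rcases lt_trichotomy δ ζ with hlt | rfl | hgt
  · exact .inl ⟨if_pos hlt, by linarith, hlt.le⟩
  · rcases hζ0.eq_or_lt with rfl | hpos
    · exact .inl ⟨by simp, zero_lt_one, le_rfl⟩
    · exact .inr ⟨by simp [hpos.ne'], hpos, le_rfl⟩
  · exact .inr ⟨by simp [hgt.not_gt, hgt.ne'], by linarith, hgt.le⟩

/-- **Optimal access strategy (Proposition 2).**
For a sensor operating point `(ε, δ)` with `1 - δ ≥ ε` and collision cap `ζ`,
the throughput `G(f₀,f₁) = ε f₀ + (1-ε) f₁` over `(f₀,f₁) ∈ [0,1]²` with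
`(1-δ) f₀ + δ f₁ ≤ ζ` is maximized at
`((ζ - δ)/(1 - δ), 1)` if `δ < ζ`, at `(0,1)` if `δ = ζ`, and at `(0, ζ / δ)` if `δ > ζ`. -/
theorem optimal_access_strategy_general
    (ζ ε δ : ℝ) (hζ : ζ ∈ Set.Icc (0:ℝ) 1)
    (hε : ε ∈ Set.Icc (0:ℝ) 1)
    (hroc : ε ≤ 1 - δ)
    (fstar : ℝ × ℝ)
    (hfstar : fstar = if δ < ζ then ((ζ - δ) / (1 - δ), 1)
      else if δ = ζ then (0, 1) else (0, ζ / δ)) :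
    (fstar.1 ∈ Set.Icc (0:ℝ) 1 ∧ fstar.2 ∈ Set.Icc (0:ℝ) 1 ∧
      (1 - δ) * fstar.1 + δ * fstar.2 ≤ ζ) ∧
    ∀ f₀ f₁ : ℝ, f₀ ∈ Set.Icc (0:ℝ) 1 → f₁ ∈ Set.Icc (0:ℝ) 1 →
      (1 - δ) * f₀ + δ * f₁ ≤ ζ →
      ε * f₀ + (1 - ε) * f₁ ≤ ε * fstar.1 + (1 - ε) * fstar.2 := by
  change IsOptimalAccess ε δ ζ fstar
  rcases optimalAccess_cases (δ := δ) hζ with ⟨heq, hδ1, hδζ⟩ | ⟨heq, hδ0, hζδ⟩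
  · rw [hfstar, heq]
    exact isOptimalAccess_of_le_of_lt_one hε.1 hδ1 hroc hδζ hζ.2
  · rw [hfstar, heq]
    exact isOptimalAccess_of_le_of_pos hδ0 hroc hζδ hζ.1

/-- **Optimal access strategy (Proposition 2).**
For a sensor operating point `(ε, δ)` with `1 - δ ≥ ε` and collision cap `ζ`,
the throughput `G(f₀,f₁) = ε f₀ + (1-ε) f₁` over `(f₀,f₁) ∈ [0,1]²` with
`(1-δ) f₀ + δ f₁ ≤ ζ` is maximized at
`((ζ-δ)/(1-δ), 1)` if `δ < ζ`, at `(0,1)` if `δ = ζ`, and at `(0, ζ/δ)` if `δ > ζ`. -/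
theorem optimal_access_strategy
    (ζ ε δ : ℝ) (hζ : ζ ∈ Set.Icc (0:ℝ) 1)
    (hε : ε ∈ Set.Icc (0:ℝ) 1) (hδ : δ ∈ Set.Icc (0:ℝ) 1)
    (hroc : ε ≤ 1 - δ)
    (fstar : ℝ × ℝ)
    (hfstar : fstar = if δ < ζ then ((ζ - δ) / (1 - δ), 1)
      else if δ = ζ then (0, 1) else (0, ζ / δ)) :
    (fstar.1 ∈ Set.Icc (0:ℝ) 1 ∧ fstar.2 ∈ Set.Icc (0:ℝ) 1 ∧
      (1 - δ) * fstar.1 + δ * fstar.2 ≤ ζ) ∧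
    ∀ f₀ f₁ : ℝ, f₀ ∈ Set.Icc (0:ℝ) 1 → f₁ ∈ Set.Icc (0:ℝ) 1 →
      (1 - δ) * f₀ + δ * f₁ ≤ ζ →
      ε * f₀ + (1 - ε) * f₁ ≤ ε * fstar.1 + (1 - ε) * fstar.2 :=
  optimal_access_strategy_general ζ ε δ hζ hε hroc fstar hfstar
end

section
/- Let P : [0,1] → [0,1] be a concave, nondecreasing best ROC curve with P(ε) ≥ ε, and let ζ ∈ (0,1) be such that there exists ε* ∈ [0,1] with 1 - P(ε*) = ζ. Then the operating point (ε*, ζ) on the ROC curve, together with transmission probabilities (f₀, f₁) = (0, 1), maximizes the throughput ε f₀ + (1-ε) f₁ over all operating points (ε, δ) with ε ≤ 1-δ ≤ P(ε) and all (f₀, f₁) ∈ [0,1]² satisfying the collision constraint (1-δ)f₀ + δ f₁ ≤ ζ. -/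
/-!
Running the detector at `(ε, δ)` and then accessing with probability `f₀` or `f₁` according to
the sensed state is itself a detector, with operating point
`(1 - throughput, 1 - collision probability)`. This point depends affinely on `(f₀, f₁)`, so it
is a convex combination of the points of the four deterministic rules: `(ε, 1 - δ)`, its mirror
`(1 - ε, δ)`, and `(0, 0)`, `(1, 1)`. All four lie below the ROC curve (`P ε ≥ ε` covers the
last three), and the hypograph of the concave `P` is convex, so the composite point does too.
The collision constraint puts it at height at least `1 - ζ = P ε*`, and as `P ε* < 1 ≤ P 1`,
concavity keeps `P` below `P ε*` to the left of `ε*`; hence `1 - throughput ≥ ε*`.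
-/

open Set

theorem Convex.bilinear_combo_mem {𝕜 E : Type*} [Field 𝕜] [LinearOrder 𝕜] [IsStrictOrderedRing 𝕜]
    [AddCommGroup E] [Module 𝕜 E] {s : Set E} (hs : Convex 𝕜 s) {x₀₀ x₀₁ x₁₀ x₁₁ : E}
    (h₀₀ : x₀₀ ∈ s) (h₀₁ : x₀₁ ∈ s) (h₁₀ : x₁₀ ∈ s) (h₁₁ : x₁₁ ∈ s) {a b : 𝕜}
    (ha : a ∈ Icc 0 1) (hb : b ∈ Icc 0 1) :
    (1 - a) • ((1 - b) • x₀₀ + b • x₀₁) + a • ((1 - b) • x₁₀ + b • x₁₁) ∈ s := by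
  have hseg : ∀ {c : 𝕜}, c ∈ Icc (0 : 𝕜) 1 → ∀ {x y : E}, x ∈ s → y ∈ s →
      (1 - c) • x + c • y ∈ s := fun hc _ _ hx hy =>
    hs hx hy (sub_nonneg.2 hc.2) hc.1 (sub_add_cancel 1 _)
  exact hseg ha (hseg hb h₀₀ h₀₁) (hseg hb h₁₀ h₁₁)

theorem ConcaveOn.le_of_apply_le {s : Set ℝ} {f : ℝ → ℝ} (hf : ConcaveOn ℝ s f) {x y z : ℝ}
    (hx : x ∈ s) (hz : z ∈ s) (hyz : y ≤ z) (hfyz : f y < f z) (hfyx : f y ≤ f x) : y ≤ x := by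
  by_contra! hxy
  have hy : y ∈ openSegment ℝ x z := by
    rw [openSegment_eq_Ioo (hxy.trans_le hyz)]
    exact ⟨hxy, hyz.lt_of_ne (by rintro rfl; exact hfyz.false)⟩
  exact (hf.left_lt_of_lt_right hx hz hy hfyz).not_ge hfyx

/-- Achievable pairs `(ε, 1 - δ)` of false-alarm probability and detection probability. -/
def rocRegion (P : ℝ → ℝ) : Set (ℝ × ℝ) := {p | p.1 ∈ Icc 0 1 ∧ p.2 ≤ P p.1}

theorem convex_rocRegion {P : ℝ → ℝ} (hconc : ConcaveOn ℝ (Icc (0:ℝ) 1) P) :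
    Convex ℝ (rocRegion P) :=
  hconc.convex_hypograph

theorem diag_mem_rocRegion {P : ℝ → ℝ} (hge : ∀ ε ∈ Icc (0:ℝ) 1, ε ≤ P ε) {t : ℝ}
    (ht : t ∈ Icc (0:ℝ) 1) : (t, t) ∈ rocRegion P :=
  ⟨ht, hge t ht⟩

theorem randomizedAccess_mem_rocRegion {P : ℝ → ℝ} (hconc : ConcaveOn ℝ (Icc (0:ℝ) 1) P)
    (hge : ∀ ε ∈ Icc (0:ℝ) 1, ε ≤ P ε) {ε δ f₀ f₁ : ℝ} (hε : ε ∈ Icc (0:ℝ) 1)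
    (hεδ : ε ≤ 1 - δ) (hδP : 1 - δ ≤ P ε) (hf₀ : f₀ ∈ Icc (0:ℝ) 1) (hf₁ : f₁ ∈ Icc (0:ℝ) 1) :
    (1 - (ε * f₀ + (1 - ε) * f₁), 1 - ((1 - δ) * f₀ + δ * f₁)) ∈ rocRegion P := by
  have hε' : 1 - ε ∈ Icc (0:ℝ) 1 := ⟨by linarith [hε.2], by linarith [hε.1]⟩
  have hnever : ((1:ℝ), (1:ℝ)) ∈ rocRegion P := diag_mem_rocRegion hge (by norm_num)
  have hsensed : (ε, 1 - δ) ∈ rocRegion P := ⟨hε, hδP⟩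
  have hflipped : (1 - ε, δ) ∈ rocRegion P := ⟨hε', by linarith [hge _ hε']⟩
  have halways : ((0:ℝ), (0:ℝ)) ∈ rocRegion P := diag_mem_rocRegion hge (by norm_num)
  convert (convex_rocRegion hconc).bilinear_combo_mem hnever hsensed hflipped halways hf₀ hf₁
    using 1
  ext <;> simp only [Prod.smul_mk, smul_eq_mul, mul_one, Prod.mk_add_mk, mul_zero, add_zero]
    <;> ring

theorem optimal_sensor_and_access_general
    (P : ℝ → ℝ) (ζ εstar : ℝ)
    (hconc : ConcaveOn ℝ (Set.Icc (0:ℝ) 1) P)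
    (hge : ∀ ε ∈ Set.Icc (0:ℝ) 1, ε ≤ P ε)
    (hζ : ζ ∈ Set.Ioo (0:ℝ) 1)
    (hεstar : εstar ∈ Set.Icc (0:ℝ) 1)
    (hstar : 1 - P εstar = ζ) :
    -- the point `(ε*, ζ)` with access rule `(0,1)` is feasible:
    (εstar ≤ 1 - ζ ∧ 1 - ζ ≤ P εstar ∧ (1 - ζ) * 0 + ζ * 1 ≤ ζ) ∧
    -- and it maximizes the throughput among all feasible designs:
    ∀ ε δ f₀ f₁ : ℝ, ε ∈ Set.Icc (0:ℝ) 1 → δ ∈ Set.Icc (0:ℝ) 1 →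
      ε ≤ 1 - δ → 1 - δ ≤ P ε →
      f₀ ∈ Set.Icc (0:ℝ) 1 → f₁ ∈ Set.Icc (0:ℝ) 1 →
      (1 - δ) * f₀ + δ * f₁ ≤ ζ →
      ε * f₀ + (1 - ε) * f₁ ≤ εstar * 0 + (1 - εstar) * 1 := by
  have hPstar : P εstar = 1 - ζ := by linarith
  refine ⟨⟨by linarith [hge εstar hεstar], hPstar.ge, by linarith⟩, ?_⟩
  intro ε δ f₀ f₁ hε _ hεδ hδP hf₀ hf₁ hcollision
  obtain ⟨hmem, hbelow⟩ := randomizedAccess_mem_rocRegion hconc hge hε hεδ hδP hf₀ hf₁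
  have hone : (1:ℝ) ∈ Icc (0:ℝ) 1 := right_mem_Icc.2 zero_le_one
  have hPlt : P εstar < P 1 := by linarith [hge 1 hone, hζ.1]
  have hεstar_le : εstar ≤ 1 - (ε * f₀ + (1 - ε) * f₁) :=
    hconc.le_of_apply_le hmem hone hεstar.2 hPlt (by linarith)
  linarith

/-- **Theorem 2: optimal joint sensor/access design.**
For a concave, nondecreasing best ROC curve `P` with `P ε ≥ ε` and a collision cap
`ζ ∈ (0,1)` attained on the curve at `ε*` (`1 - P ε* = ζ`), the operating point
`(ε*, ζ)` together with transmission probabilities `(f₀, f₁) = (0, 1)` maximizes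
the throughput `ε f₀ + (1-ε) f₁` over all feasible operating points
(`ε ≤ 1 - δ ≤ P ε`) and all `(f₀, f₁) ∈ [0,1]²` meeting the collision constraint
`(1-δ) f₀ + δ f₁ ≤ ζ`. -/
theorem optimal_sensor_and_access
    (P : ℝ → ℝ) (ζ εstar : ℝ)
    (hconc : ConcaveOn ℝ (Set.Icc (0:ℝ) 1) P)
    (hmono : MonotoneOn P (Set.Icc (0:ℝ) 1))
    (hrange : ∀ ε ∈ Set.Icc (0:ℝ) 1, P ε ∈ Set.Icc (0:ℝ) 1)
    (hge : ∀ ε ∈ Set.Icc (0:ℝ) 1, ε ≤ P ε)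
    (hζ : ζ ∈ Set.Ioo (0:ℝ) 1)
    (hεstar : εstar ∈ Set.Icc (0:ℝ) 1)
    (hstar : 1 - P εstar = ζ) :
    -- the point `(ε*, ζ)` with access rule `(0,1)` is feasible:
    (εstar ≤ 1 - ζ ∧ 1 - ζ ≤ P εstar ∧ (1 - ζ) * 0 + ζ * 1 ≤ ζ) ∧
    -- and it maximizes the throughput among all feasible designs:
    ∀ ε δ f₀ f₁ : ℝ, ε ∈ Set.Icc (0:ℝ) 1 → δ ∈ Set.Icc (0:ℝ) 1 →
      ε ≤ 1 - δ → 1 - δ ≤ P ε →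
      f₀ ∈ Set.Icc (0:ℝ) 1 → f₁ ∈ Set.Icc (0:ℝ) 1 →
      (1 - δ) * f₀ + δ * f₁ ≤ ζ →
      ε * f₀ + (1 - ε) * f₁ ≤ εstar * 0 + (1 - εstar) * 1 :=
  optimal_sensor_and_access_general P ζ εstar hconc hge hζ hεstar hstar
end

section
/- Fix a finite state space S, transition probabilities P : S × S → [0,1] with ∑_{s'} P(s, s') = 1, a finite observation set K, a finite (or arbitrary) action set 𝔸, conditional observation probabilities U_{s,k}(A), and bounded rewards. Define the finite-horizon POMDP value functions by backward recursion: V_T(Λ) = max_A ∑_{s,s'} λ_{s'} P_{s',s} U_{s,1}(A) B_A and V_t(Λ) = max_A ∑_{s,s'} λ_{s'} P_{s',s} ∑_k U_{s,k}(A) [ R_k(A) + V_{t+1}(T(Λ | A, k)) ], where T(Λ|A,k) is the Bayes belief update. Then for every t, V_t is a convex function of the belief vector Λ on the probability simplex over S. -/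
/-! By backward induction on the horizon. The terminal value is a maximum of linear functions
of the belief. At a later stage, for a fixed action `a` and observation `k`, the Bayes update is
`T(Λ|a,k) = ν(Λ) / c(Λ)` with `ν(Λ)_s = ∑_{s'} λ_{s'} P_{s',s} U_{s,k}(a)` linear and
`c(Λ) = ∑_s ν(Λ)_s`, so the `k`-th summand `c(Λ) (R_k(a) + V(ν(Λ) / c(Λ)))` of the Bellman
backup is the perspective of the convex function `R_k(a) + V` composed with a linear map, hence
convex; sums and finite maxima of convex functions are convex. -/

open Finset Matrix

theorem ConvexOn.finset_sup' {𝕜 E β ι : Type*} [Semiring 𝕜] [PartialOrder 𝕜] [AddCommMonoid E]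
    [SMul 𝕜 E] [AddCommMonoid β] [LinearOrder β] [IsOrderedAddMonoid β] [Module 𝕜 β]
    [PosSMulStrictMono 𝕜 β] {D : Set E} {s : Finset ι} (hs : s.Nonempty) {f : ι → E → β}
    (hf : ∀ i ∈ s, ConvexOn 𝕜 D (f i)) : ConvexOn 𝕜 D fun x => s.sup' hs fun i => f i x := by
  have hsup : (fun x => s.sup' hs fun i => f i x) = s.sup' hs f :=
    funext fun x => (Finset.sup'_apply hs f x).symm
  rw [hsup]
  exact Finset.sup'_induction hs f (fun _ h₁ _ h₂ => h₁.sup h₂) hf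

theorem ConvexOn.finset_sum {𝕜 E β ι : Type*} [Semiring 𝕜] [PartialOrder 𝕜] [AddCommMonoid E]
    [SMul 𝕜 E] [AddCommMonoid β] [PartialOrder β] [IsOrderedAddMonoid β] [Module 𝕜 β]
    {D : Set E} (hD : Convex 𝕜 D) {s : Finset ι} {f : ι → E → β}
    (hf : ∀ i ∈ s, ConvexOn 𝕜 D (f i)) : ConvexOn 𝕜 D (∑ i ∈ s, f i) :=
  Finset.sum_induction f (ConvexOn 𝕜 D) (fun _ _ => ConvexOn.add) (convexOn_const 0 hD) hf

section Perspective

variable {E F : Type*} [AddCommGroup E] [Module ℝ E] [AddCommGroup F] [Module ℝ F]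
  {C : Set E} {g : E → ℝ}

theorem ConvexOn.add_mul_map_inv_smul_add_le (hg : ConvexOn ℝ C g) {p q : ℝ} (hp : 0 ≤ p)
    (hq : 0 ≤ q) {u v : E} (hu : 0 < p → u ∈ C) (hv : 0 < q → v ∈ C) :
    (p + q) * g ((p + q)⁻¹ • (p • u + q • v)) ≤ p * g u + q * g v := by
  rcases hp.eq_or_lt with rfl | hp
  · rcases hq.eq_or_lt with rfl | hq
    · simp
    · simp [smul_smul, hq.ne']
  rcases hq.eq_or_lt with rfl | hq
  · simp [smul_smul, hp.ne']
  have hpq : 0 < p + q := by positivity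
  have hconv := hg.2 (hu hp) (hv hq) (div_nonneg hp.le hpq.le) (div_nonneg hq.le hpq.le)
    (by field_simp)
  calc (p + q) * g ((p + q)⁻¹ • (p • u + q • v))
      = (p + q) * g ((p / (p + q)) • u + (q / (p + q)) • v) := by
        rw [smul_add, smul_smul, smul_smul, div_eq_inv_mul, div_eq_inv_mul]
    _ ≤ (p + q) * ((p / (p + q)) • g u + (q / (p + q)) • g v) :=
        mul_le_mul_of_nonneg_left hconv hpq.le
    _ = p * g u + q * g v := by simp only [smul_eq_mul]; field_simp

theorem ConvexOn.perspective_comp (hg : ConvexOn ℝ C g) {D : Set F} (hD : Convex ℝ D)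
    (c : F →ₗ[ℝ] ℝ) (ν : F →ₗ[ℝ] E) (hc : ∀ x ∈ D, 0 ≤ c x)
    (hν : ∀ x ∈ D, c x = 0 → ν x = 0) (hνC : ∀ x ∈ D, 0 < c x → (c x)⁻¹ • ν x ∈ C) :
    ConvexOn ℝ D fun x => c x * g ((c x)⁻¹ • ν x) := by
  refine ⟨hD, fun x hx y hy a b ha hb _ => ?_⟩
  have hcancel : ∀ z ∈ D, ∀ t : ℝ, (t * c z) • (c z)⁻¹ • ν z = t • ν z := by
    intro z hz t
    rcases eq_or_ne (c z) 0 with h | h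
    · simp [h, hν z hz h]
    · rw [smul_smul, mul_assoc, mul_inv_cancel₀ h, mul_one]
  have key := hg.add_mul_map_inv_smul_add_le (mul_nonneg ha (hc x hx)) (mul_nonneg hb (hc y hy))
    (fun h => hνC x hx (pos_of_mul_pos_right h ha)) (fun h => hνC y hy (pos_of_mul_pos_right h hb))
  rw [hcancel x hx, hcancel y hy] at key
  simpa only [map_add, map_smul, smul_eq_mul, mul_assoc] using key

end Perspective

section Simplex

variable {ι κ : Type*} [Fintype ι] [Fintype κ]

theorem inv_sum_smul_mem_stdSimplex {w : κ → ℝ} (hw : 0 ≤ w) (h : 0 < ∑ j, w j) :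
    (∑ j, w j)⁻¹ • w ∈ stdSimplex ℝ κ :=
  ⟨fun j => mul_nonneg (inv_nonneg.2 h.le) (hw j), by simp [← Finset.mul_sum, h.ne']⟩

theorem ConvexOn.perspective_vecMul {M : Matrix ι κ ℝ} (hM : ∀ i j, 0 ≤ M i j) {g : (κ → ℝ) → ℝ}
    (hg : ConvexOn ℝ (stdSimplex ℝ κ) g) :
    ConvexOn ℝ (Set.Ici 0) fun Λ => (∑ j, (Λ ᵥ* M) j) * g ((∑ j, (Λ ᵥ* M) j)⁻¹ • Λ ᵥ* M) := by
  have hnn : ∀ Λ ∈ Set.Ici (0 : ι → ℝ), 0 ≤ Λ ᵥ* M := fun Λ hΛ j =>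
    sum_nonneg fun i _ => mul_nonneg (hΛ i) (hM i j)
  simpa using hg.perspective_comp (convex_Ici 0) ((∑ j, LinearMap.proj j) ∘ₗ M.vecMulLinear)
    M.vecMulLinear (fun Λ hΛ => by simpa using sum_nonneg fun j _ => hnn Λ hΛ j)
    (fun Λ hΛ h => funext fun j =>
      (sum_eq_zero_iff_of_nonneg fun j _ => hnn Λ hΛ j).1 (by simpa using h) j (mem_univ j))
    (fun Λ hΛ h => by simpa using inv_sum_smul_mem_stdSimplex (hnn Λ hΛ) (by simpa using h))

theorem convexOn_vecMul_dotProduct {D : Set (ι → ℝ)} (hD : Convex ℝ D) (P : Matrix ι κ ℝ)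
    (r : κ → ℝ) : ConvexOn ℝ D fun Λ => ∑ j, (∑ i, Λ i * P i j) * r j := by
  refine ⟨hD, fun x _ y _ a b _ _ _ => le_of_eq ?_⟩
  simp only [Pi.add_apply, Pi.smul_apply, smul_eq_mul, add_mul, sum_add_distrib, mul_sum,
    sum_mul, mul_assoc]

end Simplex

theorem convexOn_bellmanBackup {S K : Type*} [Fintype S] [Fintype K] {P : S → S → ℝ}
    (hP : ∀ s s', 0 ≤ P s s') {U : S → K → ℝ} (hU : ∀ s k, 0 ≤ U s k)
    {T : (S → ℝ) → K → S → ℝ}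
    (hT : ∀ Λ k s, T Λ k s =
      (∑ s', Λ s' * P s' s * U s k) / ∑ s'', ∑ s', Λ s' * P s' s'' * U s'' k)
    {f : K → (S → ℝ) → ℝ} (hf : ∀ k, ConvexOn ℝ (stdSimplex ℝ S) (f k)) :
    ConvexOn ℝ (stdSimplex ℝ S) fun Λ => ∑ s, (∑ s', Λ s' * P s' s) * ∑ k, U s k * f k (T Λ k) := by
  -- `Λ ᵥ* M k` is the unnormalised posterior after observing `k`.
  set M : K → Matrix S S ℝ := fun k s' s => P s' s * U s k
  have hMvec : ∀ Λ k s, (Λ ᵥ* M k) s = (∑ s', Λ s' * P s' s) * U s k := by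
    simp [M, vecMul, dotProduct, sum_mul, mul_assoc]
  have hT' : ∀ Λ k, T Λ k = (∑ s, (Λ ᵥ* M k) s)⁻¹ • Λ ᵥ* M k := fun Λ k => funext fun s => by
    simp only [hT, hMvec, Pi.smul_apply, smul_eq_mul, sum_mul, div_eq_inv_mul]
  have hregroup : (fun Λ => ∑ s, (∑ s', Λ s' * P s' s) * ∑ k, U s k * f k (T Λ k)) =
      ∑ k, fun Λ => (∑ s, (Λ ᵥ* M k) s) * f k ((∑ s, (Λ ᵥ* M k) s)⁻¹ • Λ ᵥ* M k) := by
    funext Λ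
    simp only [Finset.sum_apply, hT', hMvec, mul_sum, sum_mul, mul_assoc]
    exact sum_comm
  rw [hregroup]
  exact ConvexOn.finset_sum (convex_stdSimplex ℝ S) fun k _ =>
    ((hf k).perspective_vecMul fun s' s => mul_nonneg (hP s' s) (hU s k)).subset
      (fun _ hΛ => hΛ.1) (convex_stdSimplex ℝ S)

theorem pomdp_value_function_convex_general
    {S K As : Type*} [Fintype S] [Fintype K] [Fintype As] [Nonempty As]
    (P : S → S → ℝ) (hP0 : ∀ s s', 0 ≤ P s s')
    (U : S → K → As → ℝ) (hU0 : ∀ s k a, 0 ≤ U s k a)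
    (R : K → As → ℝ) (B : As → ℝ) (k1 : K)
    -- Bayes belief update `T(Λ | a, k)`:
    (Tup : (S → ℝ) → As → K → (S → ℝ))
    (hT : ∀ Λ a k s, Tup Λ a k s =
      (∑ s', Λ s' * P s' s * U s k a) /
        (∑ s'', ∑ s', Λ s' * P s' s'' * U s'' k a))
    -- the value functions, indexed by the number of remaining future slots:
    (V : ℕ → (S → ℝ) → ℝ)
    (hVT : ∀ Λ, V 0 Λ =
      univ.sup' univ_nonempty (fun a => ∑ s, (∑ s', Λ s' * P s' s) * U s k1 a * B a))
    (hVrec : ∀ m Λ, V (m+1) Λ =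
      univ.sup' univ_nonempty (fun a =>
        ∑ s, (∑ s', Λ s' * P s' s) * ∑ k, U s k a * (R k a + V m (Tup Λ a k)))) :
    ∀ m, ConvexOn ℝ {Λ : S → ℝ | (∀ s, 0 ≤ Λ s) ∧ ∑ s, Λ s = 1} (V m) := by
  intro m
  change ConvexOn ℝ (stdSimplex ℝ S) (V m)
  induction m with
  | zero =>
    rw [funext hVT]
    exact ConvexOn.finset_sup' _ fun a _ => by
      simpa only [mul_assoc] using
        convexOn_vecMul_dotProduct (convex_stdSimplex ℝ S) P fun s => U s k1 a * B a
  | succ m ih =>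
    rw [funext (hVrec m)]
    exact ConvexOn.finset_sup' _ fun a _ =>
      convexOn_bellmanBackup hP0 (fun s k => hU0 s k a) (fun Λ k s => hT Λ a k s)
        fun k => (convexOn_const (R k a) (convex_stdSimplex ℝ S)).add ih

/-- **Lemma 1: convexity of the POMDP value function in the belief.**
For a finite-horizon POMDP with finite state space `S`, transition matrix `P`,
finite observation set `K`, finite action set `As`, conditional observation
probabilities `U`, per-step rewards `R`, terminal rewards given by the
designated observation `k1` and bandwidths `B`, and value functions defined by
the backward recursion with Bayes belief updates, every value function `V t`
is convex on the probability simplex of belief vectors. -/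
theorem pomdp_value_function_convex
    {S K As : Type*} [Fintype S] [Fintype K] [Fintype As] [Nonempty As]
    (P : S → S → ℝ) (hP0 : ∀ s s', 0 ≤ P s s') (hP1 : ∀ s, ∑ s', P s s' = 1)
    (U : S → K → As → ℝ) (hU0 : ∀ s k a, 0 ≤ U s k a)
    (hU1 : ∀ s a, ∑ k, U s k a = 1)
    (R : K → As → ℝ) (B : As → ℝ) (k1 : K)
    -- Bayes belief update `T(Λ | a, k)`:
    (Tup : (S → ℝ) → As → K → (S → ℝ))
    (hT : ∀ Λ a k s, Tup Λ a k s =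
      (∑ s', Λ s' * P s' s * U s k a) /
        (∑ s'', ∑ s', Λ s' * P s' s'' * U s'' k a))
    -- the value functions, indexed by the number of remaining future slots:
    (V : ℕ → (S → ℝ) → ℝ)
    (hVT : ∀ Λ, V 0 Λ =
      univ.sup' univ_nonempty (fun a => ∑ s, (∑ s', Λ s' * P s' s) * U s k1 a * B a))
    (hVrec : ∀ m Λ, V (m+1) Λ =
      univ.sup' univ_nonempty (fun a =>
        ∑ s, (∑ s', Λ s' * P s' s) * ∑ k, U s k a * (R k a + V m (Tup Λ a k)))) :
    ∀ m, ConvexOn ℝ {Λ : S → ℝ | (∀ s, 0 ≤ Λ s) ∧ ∑ s, Λ s = 1} (V m) :=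
  pomdp_value_function_convex_general P hP0 U hU0 R B k1 Tup hT V hVT hVrec
end

section
/- In the single-channel-sensing POMDP, if acknowledgement K_a = 1 is observed, the Bayes-updated belief vector T(Λ | A, 1) has components λ_s' = (∑_{s'} λ_{s'} P_{s',s} · s_a) / (∑_{s} ∑_{s'} λ_{s'} P_{s',s} · s_a), and in particular does not depend on the sensor operating point (ε_a, δ_a) or the transmission probabilities (f_a(0), f_a(1)). -/
theorem Finset.div_sum_mul_right {ι 𝕜 : Type*} [DivisionRing 𝕜] (s : Finset ι) (w : ι → 𝕜)
    {c : 𝕜} (hc : c ≠ 0) (i : ι) :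
    w i * c / ∑ j ∈ s, w j * c = w i / ∑ j ∈ s, w j := by
  rw [← Finset.sum_mul, mul_div_mul_right _ _ hc]

theorem belief_update_ack_independent_general
    {S : Type*} [Fintype S]
    (Λ : S → ℝ) (P : S → S → ℝ)
    (sa : S → ℝ)
    (g : ℝ)
    -- the normalizing constant of the Bayes update is nonzero:
    (hden : (∑ s, ∑ s', Λ s' * P s' s * (sa s * g)) ≠ 0) :
    ∀ s, (∑ s', Λ s' * P s' s * (sa s * g)) /
          (∑ s'', ∑ s', Λ s' * P s' s'' * (sa s'' * g))
        = (∑ s', Λ s' * P s' s * sa s) /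
          (∑ s'', ∑ s', Λ s' * P s' s'' * sa s'') := by
  intro s
  have hweight : ∀ t, ∑ s', Λ s' * P s' t * (sa t * g) = (∑ s', Λ s' * P s' t * sa t) * g := by
    intro t
    simp only [← mul_assoc, Finset.sum_mul]
  have hg : g ≠ 0 := by
    rintro rfl
    simp at hden
  simp only [hweight]
  exact Finset.univ.div_sum_mul_right (fun t => ∑ s', Λ s' * P s' t * sa t) hg s

/-- **Lemma 2: the belief update upon `K = 1` is action-independent.**
With `U_{s,1}(A) = s_a · g` where `g = ε f(0) + (1-ε) f(1)`, the Bayes-updated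
belief after observing an acknowledgement equals
`(∑_{s'} λ_{s'} P_{s',s} s_a) / (∑_s ∑_{s'} λ_{s'} P_{s',s} s_a)` and hence does
not depend on the sensor operating point `(ε, δ)` or the transmission
probabilities `(f(0), f(1))`. -/
theorem belief_update_ack_independent
    {S : Type*} [Fintype S]
    (Λ : S → ℝ) (P : S → S → ℝ)
    (sa : S → ℝ) (hsa : ∀ s, sa s = 0 ∨ sa s = 1)
    (ε δ f0 f1 : ℝ) (g : ℝ) (hg : g = ε * f0 + (1 - ε) * f1)
    -- the normalizing constant of the Bayes update is nonzero:
    (hden : (∑ s, ∑ s', Λ s' * P s' s * (sa s * g)) ≠ 0) :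
    ∀ s, (∑ s', Λ s' * P s' s * (sa s * g)) /
          (∑ s'', ∑ s', Λ s' * P s' s'' * (sa s'' * g))
        = (∑ s', Λ s' * P s' s * sa s) /
          (∑ s'', ∑ s', Λ s' * P s' s'' * sa s'') :=
  belief_update_ack_independent_general Λ P sa g hden
end

section
/- Let A and A' be two actions on the same channel a with observation probabilities U_{s,0}(A) = 1 - s_a g and U_{s,0}(A') = 1 - s_a g' where g = ε_a f_a(0) + (1-ε_a) f_a(1) ≤ g' = ε'_a f'_a(0) + (1-ε'_a) f'_a(1). Then the Bayes-updated belief upon observing K = 0 under A is a convex combination of the updated belief upon K = 1 and the updated belief upon K = 0 under A': T(Λ|A,0) = τ · T(Λ|A,1) + (1-τ) · T(Λ|A',0), where τ = (∑_{s,s'} λ_{s'} P_{s',s} [U_{s,0}(A) - U_{s,0}(A')]) / (∑_{s,s'} λ_{s'} P_{s',s} U_{s,0}(A)) ∈ [0,1]. -/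
open Finset

/- Writing `x, y, z` for the unnormalized posteriors of `T(Λ|A,0)`, `T(Λ|A,1)`, `T(Λ|A',0)`,
one has `x = c • y + z` with `c = (g' - g) / g`, since `1 - s_a g = s_a (g' - g) + (1 - s_a g')`.
Normalizing a sum of two vectors gives the combination of their normalizations weighted by
their relative masses, and `τ` is the relative mass of `c • y`; `0 ≤ z ≤ x` makes it convex. -/

section Normalization

variable {ι 𝕜 : Type*} [Fintype ι]

theorem div_sum_eq_affine_combination [Field 𝕜] {x y z : ι → 𝕜} {c : 𝕜}
    (hxyz : ∀ i, x i - z i = c * y i)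
    (hX : ∑ i, x i ≠ 0) (hY : ∑ i, y i ≠ 0) (hZ : ∑ i, z i ≠ 0) (i : ι) :
    x i / ∑ j, x j = (∑ j, (x j - z j)) / (∑ j, x j) * (y i / ∑ j, y j)
      + (1 - (∑ j, (x j - z j)) / (∑ j, x j)) * (z i / ∑ j, z j) := by
  have hsum : ∑ j, (x j - z j) = c * ∑ j, y j := by
    simp only [hxyz, mul_sum]
  have hX' : ∑ j, x j = c * ∑ j, y j + ∑ j, z j := by
    rw [← hsum, sum_sub_distrib, sub_add_cancel]
  have hx : x i = c * y i + z i := by rw [← hxyz, sub_add_cancel]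
  rw [hX'] at hX ⊢
  rw [hsum, hx]
  field_simp
  ring

theorem sum_sub_div_sum_mem_Icc_of_le [Field 𝕜] [LinearOrder 𝕜] [IsStrictOrderedRing 𝕜]
    {x z : ι → 𝕜} (hz : ∀ i, 0 ≤ z i) (hzx : ∀ i, z i ≤ x i)
    (hX : ∑ i, x i ≠ 0) :
    (∑ i, (x i - z i)) / (∑ i, x i) ∈ Set.Icc (0 : 𝕜) 1 := by
  have hZ : 0 ≤ ∑ i, z i := sum_nonneg fun i _ => hz i
  have hZX : ∑ i, z i ≤ ∑ i, x i := sum_le_sum fun i _ => hzx i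
  have hXpos : 0 < ∑ i, x i := lt_of_le_of_ne (hZ.trans hZX) hX.symm
  rw [sum_sub_distrib]
  exact ⟨div_nonneg (by linarith) hXpos.le, (div_le_one hXpos).2 (by linarith)⟩

end Normalization

theorem belief_update_convex_combination_general
    {S : Type*} [Fintype S]
    (Λ : S → ℝ) (hΛ0 : ∀ s, 0 ≤ Λ s)
    (P : S → S → ℝ) (hP0 : ∀ s s', 0 ≤ P s s')
    (sa : S → ℝ) (hsa : ∀ s, sa s = 0 ∨ sa s = 1)
    (g g' : ℝ) (hgg' : g ≤ g') (hg'1 : g' ≤ 1)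
    -- the predicted (post-transition) belief:
    (pred : S → ℝ) (hpred : ∀ s, pred s = ∑ s', Λ s' * P s' s)
    -- the three normalizing constants are nonzero:
    (hD1 : (∑ s, pred s * (sa s * g)) ≠ 0)
    (hD0 : (∑ s, pred s * (1 - sa s * g)) ≠ 0)
    (hD0' : (∑ s, pred s * (1 - sa s * g')) ≠ 0)
    (τ : ℝ)
    (hτ : τ = (∑ s, pred s * ((1 - sa s * g) - (1 - sa s * g'))) /
              (∑ s, pred s * (1 - sa s * g))) :
    τ ∈ Set.Icc (0:ℝ) 1 ∧
    ∀ s, (pred s * (1 - sa s * g)) / (∑ s'', pred s'' * (1 - sa s'' * g))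
        = τ * ((pred s * (sa s * g)) / (∑ s'', pred s'' * (sa s'' * g)))
          + (1 - τ) * ((pred s * (1 - sa s * g')) /
              (∑ s'', pred s'' * (1 - sa s'' * g'))) := by
  have hpred0 (s : S) : 0 ≤ pred s :=
    hpred s ▸ sum_nonneg fun s' _ => mul_nonneg (hΛ0 s') (hP0 s' s)
  have hg : g ≠ 0 := by rintro rfl; simp at hD1
  rw [sum_congr rfl fun s _ => mul_sub (pred s) _ _] at hτ
  subst hτ
  have hU (s : S) : 0 ≤ 1 - sa s * g' ∧ 1 - sa s * g' ≤ 1 - sa s * g := by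
    rcases hsa s with h | h <;> simp only [h] <;> constructor <;> linarith
  refine ⟨sum_sub_div_sum_mem_Icc_of_le (fun s => mul_nonneg (hpred0 s) (hU s).1)
    (fun s => mul_le_mul_of_nonneg_left (hU s).2 (hpred0 s)) hD0, fun s => ?_⟩
  refine div_sum_eq_affine_combination (c := (g' - g) / g) (fun s => ?_) hD0 hD1 hD0' s
  field_simp
  ring

/-- **Lemma 3 (identity): the `K = 0` belief update is a convex combination.**
For two actions `A, A'` on the same channel with `U_{s,0}(A) = 1 - s_a g`,
`U_{s,0}(A') = 1 - s_a g'` and `g ≤ g'`, the Bayes update upon `K = 0` under `A`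
is the convex combination `τ · T(Λ|A,1) + (1-τ) · T(Λ|A',0)` with
`τ = ∑_s pred(s)[U_{s,0}(A) - U_{s,0}(A')] / ∑_s pred(s) U_{s,0}(A) ∈ [0,1]`. -/
theorem belief_update_convex_combination
    {S : Type*} [Fintype S]
    (Λ : S → ℝ) (hΛ0 : ∀ s, 0 ≤ Λ s) (hΛ1 : ∑ s, Λ s = 1)
    (P : S → S → ℝ) (hP0 : ∀ s s', 0 ≤ P s s') (hP1 : ∀ s, ∑ s', P s s' = 1)
    (sa : S → ℝ) (hsa : ∀ s, sa s = 0 ∨ sa s = 1)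
    (g g' : ℝ) (hg0 : 0 ≤ g) (hgg' : g ≤ g') (hg'1 : g' ≤ 1)
    -- the predicted (post-transition) belief:
    (pred : S → ℝ) (hpred : ∀ s, pred s = ∑ s', Λ s' * P s' s)
    -- the three normalizing constants are nonzero:
    (hD1 : (∑ s, pred s * (sa s * g)) ≠ 0)
    (hD0 : (∑ s, pred s * (1 - sa s * g)) ≠ 0)
    (hD0' : (∑ s, pred s * (1 - sa s * g')) ≠ 0)
    (τ : ℝ)
    (hτ : τ = (∑ s, pred s * ((1 - sa s * g) - (1 - sa s * g'))) /
              (∑ s, pred s * (1 - sa s * g))) :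
    τ ∈ Set.Icc (0:ℝ) 1 ∧
    ∀ s, (pred s * (1 - sa s * g)) / (∑ s'', pred s'' * (1 - sa s'' * g))
        = τ * ((pred s * (sa s * g)) / (∑ s'', pred s'' * (sa s'' * g)))
          + (1 - τ) * ((pred s * (1 - sa s * g')) /
              (∑ s'', pred s'' * (1 - sa s'' * g'))) :=
  belief_update_convex_combination_general Λ hΛ0 P hP0 sa hsa g g' hgg' hg'1 pred hpred hD1 hD0 hD0'
    τ hτ
end

section
/- Under the hypotheses of Lemma 3 (two actions A, A' on the same channel with g ≤ g'), and with V_{t+1} convex on the belief simplex, the inequality V_{t+1}(T(Λ|A,0)) ≤ τ V_{t+1}(T(Λ|A,1)) + (1-τ) V_{t+1}(T(Λ|A',0)) holds, with τ as defined in Lemma 3. -/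
/-!
The likelihoods `sa s * g` and `sa s * g'` of observing `1` differ by a constant factor, so both
actions give the same posterior after `1`. The unnormalized posterior of `A` after `0` splits as
`pred * (1 - sa g) = (g' - g) • (pred * sa) + pred * (1 - sa g')`, a nonnegative combination of
multiples of the posteriors of `A` after `1` and of `A'` after `0`. Normalizing such a combination
gives the convex combination of the two posteriors with weights `τ` and `1 - τ`, and convexity of
`V` concludes.
-/

open Finset

namespace BeliefSimplex

variable {S : Type*} [Fintype S]

/-- The Bayes update `T(Λ|A,o)` is `normalizeSum` of `s ↦ pred s * P(o | s, A)`. -/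
noncomputable def normalizeSum (w : S → ℝ) : S → ℝ := fun s => w s / ∑ s', w s'

theorem normalizeSum_mem_stdSimplex {w : S → ℝ} (hw : ∀ s, 0 ≤ w s) (hsum : ∑ s, w s ≠ 0) :
    normalizeSum w ∈ stdSimplex ℝ S :=
  ⟨fun s => div_nonneg (hw s) (sum_nonneg fun s _ => hw s),
    by simp only [normalizeSum, ← sum_div, div_self hsum]⟩

theorem sum_smul_normalizeSum {w : S → ℝ} (hsum : ∑ s, w s ≠ 0) :
    (∑ s, w s) • normalizeSum w = w := by
  funext s
  simp only [normalizeSum, Pi.smul_apply, smul_eq_mul]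
  field_simp

theorem normalizeSum_smul {c : ℝ} (hc : c ≠ 0) (w : S → ℝ) :
    normalizeSum (c • w) = normalizeSum w := by
  funext s
  simp only [normalizeSum, Pi.smul_apply, smul_eq_mul, ← mul_sum, mul_div_mul_left _ _ hc]

theorem sum_smul_add (c : ℝ) (u w : S → ℝ) :
    ∑ s, (c • u + w) s = c * ∑ s, u s + ∑ s, w s := by
  simp only [Pi.add_apply, Pi.smul_apply, smul_eq_mul, sum_add_distrib, mul_sum]

theorem normalizeSum_smul_add {u w : S → ℝ} (hu : ∑ s, u s ≠ 0) (hw : ∑ s, w s ≠ 0) {c τ : ℝ}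
    (hcuw : ∑ s, (c • u + w) s ≠ 0) (hτ : τ = c * (∑ s, u s) / ∑ s, (c • u + w) s) :
    normalizeSum (c • u + w) = τ • normalizeSum u + (1 - τ) • normalizeSum w := by
  rw [sum_smul_add] at hcuw hτ
  subst hτ
  unfold normalizeSum
  rw [sum_smul_add]
  funext s
  simp only [Pi.add_apply, Pi.smul_apply, smul_eq_mul]
  field_simp
  ring

theorem _root_.ConvexOn.map_normalizeSum_smul_add_le {f : (S → ℝ) → ℝ}
    (hf : ConvexOn ℝ (stdSimplex ℝ S) f) {u w : S → ℝ} (hu0 : ∀ s, 0 ≤ u s)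
    (hw0 : ∀ s, 0 ≤ w s) (hu : ∑ s, u s ≠ 0) (hw : ∑ s, w s ≠ 0) {c τ : ℝ} (hc : 0 ≤ c)
    (hτ : τ = c * (∑ s, u s) / ∑ s, (c • u + w) s) :
    f (normalizeSum (c • u + w)) ≤ τ * f (normalizeSum u) + (1 - τ) * f (normalizeSum w) := by
  have hcu : 0 ≤ c * ∑ s, u s := mul_nonneg hc (sum_nonneg fun s _ => hu0 s)
  have hpos : 0 < ∑ s, (c • u + w) s :=
    sum_smul_add c u w ▸
      add_pos_of_nonneg_of_pos hcu ((sum_nonneg fun s _ => hw0 s).lt_of_ne hw.symm)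
  rw [normalizeSum_smul_add hu hw hpos.ne' hτ]
  refine hf.2 (normalizeSum_mem_stdSimplex hu0 hu) (normalizeSum_mem_stdSimplex hw0 hw)
    (hτ ▸ div_nonneg hcu hpos.le) ?_ (add_sub_cancel _ _)
  rw [sub_nonneg, hτ, div_le_one hpos, sum_smul_add]
  exact le_add_of_nonneg_right (sum_nonneg fun s _ => hw0 s)

end BeliefSimplex

open BeliefSimplex

theorem value_update_inequality_general
    {S : Type*} [Fintype S]
    (Λ : S → ℝ) (hΛ0 : ∀ s, 0 ≤ Λ s)
    (P : S → S → ℝ) (hP0 : ∀ s s', 0 ≤ P s s')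
    (sa : S → ℝ) (hsa : ∀ s, sa s = 0 ∨ sa s = 1)
    (g g' : ℝ) (hgg' : g ≤ g') (hg'1 : g' ≤ 1)
    (pred : S → ℝ) (hpred : ∀ s, pred s = ∑ s', Λ s' * P s' s)
    (hD1 : (∑ s, pred s * (sa s * g)) ≠ 0)
    (hD0' : (∑ s, pred s * (1 - sa s * g')) ≠ 0)
    (τ : ℝ)
    (hτ : τ = (∑ s, pred s * ((1 - sa s * g) - (1 - sa s * g'))) /
              (∑ s, pred s * (1 - sa s * g)))
    (V : (S → ℝ) → ℝ)
    (hV : ConvexOn ℝ {μ : S → ℝ | (∀ s, 0 ≤ μ s) ∧ ∑ s, μ s = 1} V) :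
    V (fun s => (pred s * (1 - sa s * g)) / (∑ s'', pred s'' * (1 - sa s'' * g)))
      ≤ τ * V (fun s => (pred s * (sa s * g)) / (∑ s'', pred s'' * (sa s'' * g)))
        + (1 - τ) * V (fun s => (pred s * (1 - sa s * g')) /
            (∑ s'', pred s'' * (1 - sa s'' * g'))) := by
  let u : S → ℝ := fun s => pred s * sa s
  let w : S → ℝ := fun s => pred s * (1 - sa s * g')
  have hpred0 (s : S) : 0 ≤ pred s :=
    hpred s ▸ sum_nonneg fun s' _ => mul_nonneg (hΛ0 s') (hP0 s' s)
  have hsa0 (s : S) : 0 ≤ sa s := by rcases hsa s with h | h <;> simp [h]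
  have hsag' (s : S) : sa s * g' ≤ 1 := by rcases hsa s with h | h <;> simp [h, hg'1]
  have hu0 (s : S) : 0 ≤ u s := mul_nonneg (hpred0 s) (hsa0 s)
  have hw0 (s : S) : 0 ≤ w s := mul_nonneg (hpred0 s) (sub_nonneg.2 (hsag' s))
  have hgu : (fun s => pred s * (sa s * g)) = g • u := by
    funext s; simp only [Pi.smul_apply, smul_eq_mul, u]; ring
  have hsum_gu : ∑ s, pred s * (sa s * g) = g * ∑ s, u s := by
    rw [mul_sum]
    exact sum_congr rfl fun s _ => congrFun hgu s
  have hg : g ≠ 0 := left_ne_zero_of_mul (hsum_gu ▸ hD1)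
  have hu : ∑ s, u s ≠ 0 := right_ne_zero_of_mul (hsum_gu ▸ hD1)
  have hsplit : (fun s => pred s * (1 - sa s * g)) = (g' - g) • u + w := by
    funext s; simp only [Pi.add_apply, Pi.smul_apply, smul_eq_mul, u, w]; ring
  have hτ' : τ = (g' - g) * (∑ s, u s) / ∑ s, ((g' - g) • u + w) s := by
    rw [hτ, ← hsplit, mul_sum]
    congr 1
    exact sum_congr rfl fun s _ => by simp only [u]; ring
  change V (normalizeSum fun s => pred s * (1 - sa s * g))
    ≤ τ * V (normalizeSum fun s => pred s * (sa s * g)) + (1 - τ) * V (normalizeSum w)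
  rw [hgu, normalizeSum_smul hg, hsplit]
  exact hV.map_normalizeSum_smul_add_le hu0 hw0 hu hD0' (sub_nonneg.2 hgg') hτ'

/-- **Lemma 3: value-function inequality.**
Under the hypotheses of the convex-combination identity (two actions `A, A'` on
the same channel with `g ≤ g'`), and with the value function `V` convex on the
belief simplex, `V(T(Λ|A,0)) ≤ τ V(T(Λ|A,1)) + (1-τ) V(T(Λ|A',0))`. -/
theorem value_update_inequality
    {S : Type*} [Fintype S]
    (Λ : S → ℝ) (hΛ0 : ∀ s, 0 ≤ Λ s) (hΛ1 : ∑ s, Λ s = 1)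
    (P : S → S → ℝ) (hP0 : ∀ s s', 0 ≤ P s s') (hP1 : ∀ s, ∑ s', P s s' = 1)
    (sa : S → ℝ) (hsa : ∀ s, sa s = 0 ∨ sa s = 1)
    (g g' : ℝ) (hg0 : 0 ≤ g) (hgg' : g ≤ g') (hg'1 : g' ≤ 1)
    (pred : S → ℝ) (hpred : ∀ s, pred s = ∑ s', Λ s' * P s' s)
    (hD1 : (∑ s, pred s * (sa s * g)) ≠ 0)
    (hD0 : (∑ s, pred s * (1 - sa s * g)) ≠ 0)
    (hD0' : (∑ s, pred s * (1 - sa s * g')) ≠ 0)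
    (τ : ℝ)
    (hτ : τ = (∑ s, pred s * ((1 - sa s * g) - (1 - sa s * g'))) /
              (∑ s, pred s * (1 - sa s * g)))
    (V : (S → ℝ) → ℝ)
    (hV : ConvexOn ℝ {μ : S → ℝ | (∀ s, 0 ≤ μ s) ∧ ∑ s, μ s = 1} V) :
    V (fun s => (pred s * (1 - sa s * g)) / (∑ s'', pred s'' * (1 - sa s'' * g)))
      ≤ τ * V (fun s => (pred s * (sa s * g)) / (∑ s'', pred s'' * (sa s'' * g)))
        + (1 - τ) * V (fun s => (pred s * (1 - sa s * g')) /
            (∑ s'', pred s'' * (1 - sa s'' * g'))) :=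
  value_update_inequality_general Λ hΛ0 P hP0 sa hsa g g' hgg' hg'1 pred hpred hD1 hD0' τ hτ V hV
end

section
/- In the single-channel-sensing POMDP with value functions defined by backward recursion and convex V_{t+1}, the expected remaining reward Q_t(Λ | A) = ∑_{s,s'} λ_{s'} P_{s',s} ∑_{k∈{0,1}} U_{s,k}(A) [k B_a + V_{t+1}(T(Λ|A,k))] is monotone nondecreasing in the quantity g = ε_a f_a(0) + (1-ε_a) f_a(1): if two actions A, A' on the same channel satisfy g(A) ≤ g(A'), then Q_t(Λ|A) ≤ Q_t(Λ|A'). -/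
/-!
Write `Φ(w) = (∑ w) · V(w / ∑ w)` for the perspective of `V`, defined on unnormalized beliefs
`w ≥ 0`. It is homogeneous, and convexity of `V` makes it subadditive. The remaining reward is
`Q(x) = x · (α B_a + Φ(d)) + Φ(w_x)` with `d = pred · s_a`, `α = ∑ d` and
`w_x = pred · (1 - s_a x)`. Since `w_g = w_{g'} + (g' - g) d`, subadditivity gives
`Φ(w_g) ≤ Φ(w_{g'}) + (g' - g) Φ(d)`, and the remaining difference `(g' - g) α B_a` is
nonnegative.
-/

open Finset

noncomputable section

namespace Belief

variable {S : Type*} [Fintype S]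

def normalize (w : S → ℝ) : S → ℝ := fun u => w u / ∑ s, w s

/-- At `w = 0` this is `0`: the junk value of `V` at `0 / 0` is multiplied by the zero mass. -/
def perspective (V : (S → ℝ) → ℝ) (w : S → ℝ) : ℝ := (∑ s, w s) * V (normalize w)

theorem normalize_mem_stdSimplex {w : S → ℝ} (hw : 0 ≤ w) (hw' : ∑ s, w s ≠ 0) :
    normalize w ∈ stdSimplex ℝ S :=
  ⟨fun s => div_nonneg (hw s) (Fintype.sum_nonneg hw), by
    simp only [normalize, ← sum_div, div_self hw']⟩

theorem normalize_smul {c : ℝ} (hc : c ≠ 0) (w : S → ℝ) : normalize (c • w) = normalize w := by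
  funext u
  simp only [normalize, Pi.smul_apply, smul_eq_mul, ← mul_sum, mul_div_mul_left _ _ hc]

theorem perspective_smul (V : (S → ℝ) → ℝ) (c : ℝ) (w : S → ℝ) :
    perspective V (c • w) = c * perspective V w := by
  rcases eq_or_ne c 0 with rfl | hc
  · simp [perspective]
  · simp only [perspective, normalize_smul hc, Pi.smul_apply, smul_eq_mul, ← mul_sum, mul_assoc]

theorem perspective_zero (V : (S → ℝ) → ℝ) : perspective V 0 = 0 := by
  simp [perspective]

theorem _root_.ConvexOn.perspective_add_le {V : (S → ℝ) → ℝ}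
    (hV : ConvexOn ℝ (stdSimplex ℝ S) V) {v w : S → ℝ} (hv : 0 ≤ v) (hw : 0 ≤ w) :
    perspective V (v + w) ≤ perspective V v + perspective V w := by
  rcases eq_or_ne (∑ s, v s) 0 with hv0 | hv0
  · simp [(Fintype.sum_eq_zero_iff_of_nonneg hv).1 hv0, perspective_zero]
  rcases eq_or_ne (∑ s, w s) 0 with hw0 | hw0
  · simp [(Fintype.sum_eq_zero_iff_of_nonneg hw).1 hw0, perspective_zero]
  set m := ∑ s, v s + ∑ s, w s
  have hm : 0 < m :=
    add_pos ((Fintype.sum_nonneg hv).lt_of_ne' hv0) ((Fintype.sum_nonneg hw).lt_of_ne' hw0)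
  have hsum : ∑ s, (v s + w s) = m := sum_add_distrib
  have hcomb : normalize (v + w)
      = ((∑ s, v s) / m) • normalize v + ((∑ s, w s) / m) • normalize w := by
    funext u
    simp only [normalize, hsum, Pi.add_apply, Pi.smul_apply, smul_eq_mul]
    field_simp
  have hconv := hV.2 (normalize_mem_stdSimplex hv hv0) (normalize_mem_stdSimplex hw hw0)
    (div_nonneg (Fintype.sum_nonneg hv) hm.le) (div_nonneg (Fintype.sum_nonneg hw) hm.le)
    (by rw [← add_div, div_self hm.ne'])
  rw [← hcomb, smul_eq_mul, smul_eq_mul] at hconv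
  calc perspective V (v + w) = m * V (normalize (v + w)) := by
        simp only [perspective, Pi.add_apply, hsum]
    _ ≤ m * ((∑ s, v s) / m * V (normalize v) + (∑ s, w s) / m * V (normalize w)) :=
        mul_le_mul_of_nonneg_left hconv hm.le
    _ = perspective V v + perspective V w := by
        simp only [perspective]; field_simp

end Belief

end

open Belief in
theorem Q_monotone_in_g_general
    {S : Type*} [Fintype S]
    (Λ : S → ℝ) (hΛ0 : ∀ s, 0 ≤ Λ s)
    (P : S → S → ℝ) (hP0 : ∀ s s', 0 ≤ P s s')
    (sa : S → ℝ) (hsa : ∀ s, sa s = 0 ∨ sa s = 1)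
    (Ba : ℝ) (hBa : 0 ≤ Ba)
    (g g' : ℝ) (hgg' : g ≤ g') (hg'1 : g' ≤ 1)
    (pred : S → ℝ) (hpred : ∀ s, pred s = ∑ s', Λ s' * P s' s)
    (V : (S → ℝ) → ℝ)
    (hV : ConvexOn ℝ {μ : S → ℝ | (∀ s, 0 ≤ μ s) ∧ ∑ s, μ s = 1} V)
    -- the expected remaining reward as a function of `g`:
    (Q : ℝ → ℝ)
    (hQ : ∀ x : ℝ, Q x =
      ∑ s, pred s * (sa s * x *
          (Ba + V (fun u => (pred u * sa u) / (∑ s'', pred s'' * sa s'')))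
        + (1 - sa s * x) *
          V (fun u => (pred u * (1 - sa u * x)) /
              (∑ s'', pred s'' * (1 - sa s'' * x))))) :
    Q g ≤ Q g' := by
  have hpred0 : 0 ≤ pred := fun s =>
    (hpred s).symm ▸ sum_nonneg fun s' _ => mul_nonneg (hΛ0 s') (hP0 s' s)
  set d : S → ℝ := fun u => pred u * sa u
  set w : ℝ → S → ℝ := fun x u => pred u * (1 - sa u * x)
  have hQ_eq : ∀ x, Q x = x * ((∑ s, d s) * Ba + perspective V d) + perspective V (w x) := by
    intro x
    rw [hQ x, perspective, perspective]
    change ∑ s, pred s * (sa s * x * (Ba + V (normalize d)) + (1 - sa s * x) * V (normalize (w x)))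
      = _
    generalize V (normalize d) = Vd
    generalize V (normalize (w x)) = Vw
    simp only [d, w, sum_mul, mul_sum, ← sum_add_distrib]
    exact sum_congr rfl fun s _ => by ring
  have hd : 0 ≤ d := fun u => mul_nonneg (hpred0 u) (by rcases hsa u with h | h <;> simp [h])
  have hw' : 0 ≤ w g' := fun u =>
    mul_nonneg (hpred0 u) (by rcases hsa u with h | h <;> simp [h, hg'1])
  have hsplit : w g = w g' + (g' - g) • d := by
    funext u; simp only [w, d, Pi.add_apply, Pi.smul_apply, smul_eq_mul]; ring
  have hsub : perspective V (w g) ≤ perspective V (w g') + (g' - g) * perspective V d := by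
    rw [hsplit, ← perspective_smul]
    exact hV.perspective_add_le hw' (smul_nonneg (sub_nonneg.2 hgg') hd)
  have hBa_term : 0 ≤ (g' - g) * ((∑ s, d s) * Ba) :=
    mul_nonneg (sub_nonneg.2 hgg') (mul_nonneg (Fintype.sum_nonneg hd) hBa)
  rw [hQ_eq, hQ_eq]
  linear_combination hsub + hBa_term

/-- **Monotonicity of the expected remaining reward in `g` (heart of Theorem 1).**
With `U_{s,1}(A) = s_a g(A)`, `U_{s,0}(A) = 1 - s_a g(A)`, belief updates
`T(Λ|A,1)` (independent of `g`, Lemma 2) and `T(Λ|A,0)`, and `V_{t+1}` convex on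
the belief simplex, the expected remaining reward
`Q_t(Λ|A) = ∑_s pred(s) [ s_a g (B_a + V(T(Λ|A,1))) + (1 - s_a g) V(T(Λ|A,0)) ]`
is nondecreasing in `g = ε_a f_a(0) + (1-ε_a) f_a(1)`. -/
theorem Q_monotone_in_g
    {S : Type*} [Fintype S]
    (Λ : S → ℝ) (hΛ0 : ∀ s, 0 ≤ Λ s) (hΛ1 : ∑ s, Λ s = 1)
    (P : S → S → ℝ) (hP0 : ∀ s s', 0 ≤ P s s') (hP1 : ∀ s, ∑ s', P s s' = 1)
    (sa : S → ℝ) (hsa : ∀ s, sa s = 0 ∨ sa s = 1)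
    (Ba : ℝ) (hBa : 0 ≤ Ba)
    (g g' : ℝ) (hg0 : 0 ≤ g) (hgg' : g ≤ g') (hg'1 : g' ≤ 1)
    (pred : S → ℝ) (hpred : ∀ s, pred s = ∑ s', Λ s' * P s' s)
    -- nonzero normalizing constants:
    (hDsa : (∑ s, pred s * sa s) ≠ 0)
    (hD0 : (∑ s, pred s * (1 - sa s * g)) ≠ 0)
    (hD0' : (∑ s, pred s * (1 - sa s * g')) ≠ 0)
    (V : (S → ℝ) → ℝ)
    (hV : ConvexOn ℝ {μ : S → ℝ | (∀ s, 0 ≤ μ s) ∧ ∑ s, μ s = 1} V)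
    -- the expected remaining reward as a function of `g`:
    (Q : ℝ → ℝ)
    (hQ : ∀ x : ℝ, Q x =
      ∑ s, pred s * (sa s * x *
          (Ba + V (fun u => (pred u * sa u) / (∑ s'', pred s'' * sa s'')))
        + (1 - sa s * x) *
          V (fun u => (pred u * (1 - sa u * x)) /
              (∑ s'', pred s'' * (1 - sa s'' * x))))) :
    Q g ≤ Q g' :=
  Q_monotone_in_g_general Λ hΛ0 P hP0 sa hsa Ba hBa g g' hgg' hg'1 pred hpred V hV Q hQ
end

section
/- The separation principle: for the constrained finite-horizon POMDP of opportunistic spectrum access with single-channel sensing, the policy that, for every chosen channel and slot, selects the sensor operating point and transmission probabilities maximizing the instantaneous throughput ε f(0) + (1-ε) f(1) subject to the per-slot collision constraint (1-δ)f(0) + δ f(1) ≤ ζ, and then chooses the sensing (channel-selection) policy to maximize total expected reward, achieves the maximum total expected reward over all (possibly randomized, history-dependent) joint policies satisfying the collision constraint in every slot. -/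
/-!
For each channel, concavity of the ROC curve gives a supporting line at the optimal operating
point, i.e. a Lagrange multiplier `K ≥ 0` with `gain ≤ (1 - ε*) + K (collision - ζ)` for every
feasible design on that channel. Averaged over the randomization of a policy, the collision
constraint then bounds the mean probability of accessing an idle channel `c` by `1 - ε* c`.

The expected reward of a fixed policy is linear in the unnormalized belief, so the randomized
actions of one slot can be grouped by channel, and backward induction shows that no policy beats
the Bellman value of the sensing problem in which channel `c` is always accessed with probability
`1 - ε* c` when idle. Choosing a maximizing channel in every slot attains that value.
-/

open Finset

/-- A joint OSA action in one slot: a channel to sense, a sensor operating point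
`(eps, del)` (false-alarm and miss probabilities), and transmission
probabilities `(f0, f1)` given the sensing outcome (busy/idle). -/
structure OSAAction (C : Type*) where
  ch : C
  eps : ℝ
  del : ℝ
  f0 : ℝ
  f1 : ℝ

/-- Probability of accessing the chosen channel given it is idle. -/
noncomputable def OSAAction.gain {C : Type*} (a : OSAAction C) : ℝ :=
  a.eps * a.f0 + (1 - a.eps) * a.f1

/-- Probability of accessing the chosen channel given it is busy (collision). -/
noncomputable def OSAAction.collision {C : Type*} (a : OSAAction C) : ℝ :=
  (1 - a.del) * a.f0 + a.del * a.f1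

/-- Feasibility of an action w.r.t. the best ROC curves `Pc`. -/
def OSAAction.feasible {C : Type*} (Pc : C → ℝ → ℝ) (a : OSAAction C) : Prop :=
  a.eps ∈ Set.Icc (0:ℝ) 1 ∧ a.del ∈ Set.Icc (0:ℝ) 1 ∧
  a.f0 ∈ Set.Icc (0:ℝ) 1 ∧ a.f1 ∈ Set.Icc (0:ℝ) 1 ∧
  a.eps ≤ 1 - a.del ∧ 1 - a.del ≤ Pc a.ch a.eps

/-- Expected total reward of a (randomized, history-dependent) policy `(π, pr)`
over the remaining horizon, evaluated on the unnormalized joint weight `w` of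
state and observation history `h`.  In each slot the belief first transits by
`P`, the policy draws a randomization index `r` with probability `pr`, the
channel `(π _ _ r).ch` is sensed and accessed, an acknowledgement (`true`) is
received iff the channel is idle (`occ s c = 1`) and accessed (probability
`gain`), and the reward is the bandwidth `B c` of the accessed channel. -/
noncomputable def evalOSA {S C R : Type*} [Fintype S] [Fintype C] [Fintype R]
    (P : S → S → ℝ) (occ : S → C → ℝ) (B : C → ℝ)
    (π : ℕ → List Bool → R → OSAAction C)
    (pr : ℕ → List Bool → R → ℝ) :
    ℕ → List Bool → (S → ℝ) → ℝ
  | 0, _, _ => 0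
  | (m+1), h, w =>
      ∑ r, pr (m+1) h r *
        (B (π (m+1) h r).ch *
            (∑ s, (∑ s', w s' * P s' s) * occ s (π (m+1) h r).ch * (π (m+1) h r).gain)
          + evalOSA P occ B π pr m (h ++ [true])
              (fun s => (∑ s', w s' * P s' s) * occ s (π (m+1) h r).ch * (π (m+1) h r).gain)
          + evalOSA P occ B π pr m (h ++ [false])
              (fun s => (∑ s', w s' * P s' s) *
                (1 - occ s (π (m+1) h r).ch * (π (m+1) h r).gain)))

open Matrix

lemma mul_add_mul_le_of_corners {x y A B M : ℝ} (hx : x ∈ Set.Icc (0 : ℝ) 1)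
    (hy : y ∈ Set.Icc (0 : ℝ) 1) (h00 : 0 ≤ M) (h10 : A ≤ M) (h01 : B ≤ M) (h11 : A + B ≤ M) :
    x * A + y * B ≤ M := by
  obtain ⟨hx0, hx1⟩ := hx
  obtain ⟨hy0, hy1⟩ := hy
  rcases le_total x y with hxy | hyx
  · nlinarith [mul_le_mul_of_nonneg_left h11 hx0, mul_le_mul_of_nonneg_left h01 (sub_nonneg.2 hxy),
      mul_nonneg (sub_nonneg.2 hy1) h00]
  · nlinarith [mul_le_mul_of_nonneg_left h11 hy0, mul_le_mul_of_nonneg_left h10 (sub_nonneg.2 hyx),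
      mul_nonneg (sub_nonneg.2 hx1) h00]

theorem ConcaveOn.exists_le_add_mul_sub {s : Set ℝ} {f : ℝ → ℝ} {x : ℝ} (hf : ConcaveOn ℝ s f)
    (hx : x ∈ interior s) : ∃ k, ∀ y ∈ s, f y ≤ f x + k * (y - x) := by
  have hconv : ConvexOn ℝ s (-f) := hf.neg
  refine ⟨-derivWithin (-f) (Set.Ioi x) x, fun y hy => ?_⟩
  rcases lt_trichotomy y x with hyx | rfl | hxy
  · have := (hconv.slope_le_leftDeriv_of_mem_interior hy hx hyx).trans
      (hconv.leftDeriv_le_rightDeriv_of_mem_interior hx)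
    rw [slope_def_field, div_le_iff₀ (sub_pos.2 hyx)] at this
    simp only [Pi.neg_apply] at this
    linarith
  · simp
  · have := hconv.rightDeriv_le_slope_of_mem_interior hx hy hxy
    rw [slope_def_field, le_div_iff₀ (sub_pos.2 hxy)] at this
    simp only [Pi.neg_apply] at this
    linarith

lemma sum_mul_le_of_le_add_mul {ι : Type*} (s : Finset ι) {q x y : ι → ℝ} {a K b : ℝ}
    (hq : ∀ i ∈ s, 0 ≤ q i) (hK : 0 ≤ K) (hxy : ∀ i ∈ s, x i ≤ a + K * (y i - b))
    (hy : ∑ i ∈ s, q i * y i ≤ b * ∑ i ∈ s, q i) :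
    ∑ i ∈ s, q i * x i ≤ a * ∑ i ∈ s, q i :=
  calc ∑ i ∈ s, q i * x i ≤ ∑ i ∈ s, q i * (a + K * (y i - b)) :=
        sum_le_sum fun i hi => mul_le_mul_of_nonneg_left (hxy i hi) (hq i hi)
    _ = a * ∑ i ∈ s, q i + K * (∑ i ∈ s, q i * y i - b * ∑ i ∈ s, q i) := by
        simp only [mul_sum, ← sum_sub_distrib, ← sum_add_distrib]
        exact sum_congr rfl fun i _ => by ring
    _ ≤ a * ∑ i ∈ s, q i := by
        nlinarith [mul_nonpos_of_nonneg_of_nonpos hK (sub_nonpos.2 hy)]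

section Lagrangian

variable {C : Type*} {Pc : C → ℝ → ℝ}

lemma OSAAction.gain_nonneg {a : OSAAction C} (ha : a.feasible Pc) : 0 ≤ a.gain := by
  obtain ⟨⟨he0, he1⟩, -, ⟨h00, -⟩, ⟨h10, -⟩, -⟩ := ha
  unfold OSAAction.gain
  have := mul_nonneg he0 h00
  have := mul_nonneg (sub_nonneg.2 he1) h10
  linarith

lemma OSAAction.gain_le_one {a : OSAAction C} (ha : a.feasible Pc) : a.gain ≤ 1 := by
  obtain ⟨⟨he0, he1⟩, -, ⟨-, h01⟩, ⟨-, h11⟩, -⟩ := ha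
  unfold OSAAction.gain
  nlinarith

/-- `h0`, `h1` and `hroc` say that the line of slope `1 / K` through `(εs, 1 - ζ)` lies above the
ROC curve of the chosen channel at `0`, `1` and `a.eps`. -/
lemma OSAAction.gain_le_of_roc_le {a : OSAAction C} (ha : a.feasible Pc) {K εs ζ : ℝ} (hK : 0 ≤ K)
    (h0 : K * ζ ≤ 1 - εs) (h1 : εs ≤ K * (1 - ζ))
    (hroc : K * (Pc a.ch a.eps - (1 - ζ)) ≤ a.eps - εs) :
    a.gain ≤ 1 - εs + K * (a.collision - ζ) := by
  obtain ⟨⟨he0, he1⟩, -, hf0, hf1, hed, hpc⟩ := ha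
  -- `gain - K * collision` is affine in `(f0, f1)`, so it suffices to check the corners.
  have hcorners := mul_add_mul_le_of_corners (A := a.eps - K * (1 - a.del))
    (B := 1 - a.eps - K * a.del) (M := 1 - εs - K * ζ) hf0 hf1 (by linarith) (by
      nlinarith [mul_le_mul_of_nonneg_left hed hK,
        mul_le_mul_of_nonneg_left (show 1 - K ≤ 1 - εs - K * ζ by linarith) he0,
        mul_nonneg (sub_nonneg.2 he1) (show 0 ≤ 1 - εs - K * ζ by linarith)])
    (by nlinarith [mul_le_mul_of_nonneg_left hpc hK]) (by linarith)
  unfold OSAAction.gain OSAAction.collision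
  linarith

lemma roc_le_of_optimal {c : C} (hconc : ConcaveOn ℝ (Set.Icc (0 : ℝ) 1) (Pc c))
    (hPc0 : 0 ≤ Pc c 0) {ζ εs : ℝ} (hεs : 0 < εs) (hf : OSAAction.feasible Pc ⟨c, εs, ζ, 0, 1⟩)
    (hopt : ∀ a : OSAAction C, a.feasible Pc → a.ch = c → a.collision ≤ ζ → a.gain ≤ 1 - εs) :
    Pc c εs ≤ 1 - ζ := by
  obtain ⟨⟨-, hεs1⟩, ⟨hζ0, hζ1⟩, -, -, hεsζ : εs ≤ 1 - ζ, -⟩ := hf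
  by_contra! hlt
  have hpos : 0 < Pc c εs := by linarith
  set t := (1 - ζ) / Pc c εs
  have ht0 : 0 ≤ t := div_nonneg (by linarith) hpos.le
  have ht1 : t < 1 := (div_lt_one hpos).2 hlt
  -- Scaling the operating point towards `0` keeps the detection probability above `1 - ζ`.
  have hroc : 1 - ζ ≤ Pc c (t * εs) := by
    have := hconc.2 (x := εs) (y := 0) ⟨hεs.le, hεs1⟩ ⟨le_rfl, zero_le_one⟩ ht0
      (sub_nonneg.2 ht1.le) (by ring)
    simp only [smul_eq_mul, mul_zero, add_zero] at this
    have htP : t * Pc c εs = 1 - ζ := div_mul_cancel₀ _ hpos.ne'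
    nlinarith [mul_nonneg (sub_nonneg.2 ht1.le) hPc0]
  have hgain := hopt ⟨c, t * εs, ζ, 0, 1⟩
    ⟨⟨by positivity, by nlinarith⟩, ⟨hζ0, hζ1⟩, ⟨le_rfl, zero_le_one⟩, ⟨zero_le_one, le_rfl⟩,
      by dsimp only; nlinarith, hroc⟩ rfl (by simp [OSAAction.collision])
  simp only [OSAAction.gain] at hgain
  nlinarith

theorem exists_gain_le_add_mul_collision {c : C} (hconc : ConcaveOn ℝ (Set.Icc (0 : ℝ) 1) (Pc c))
    (hdiag : ∀ ε ∈ Set.Icc (0 : ℝ) 1, ε ≤ Pc c ε) {ζ εs : ℝ} (hζ : 0 < ζ)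
    (hf : OSAAction.feasible Pc ⟨c, εs, ζ, 0, 1⟩)
    (hopt : ∀ a : OSAAction C, a.feasible Pc → a.ch = c → a.collision ≤ ζ → a.gain ≤ 1 - εs) :
    ∃ K, 0 ≤ K ∧ ∀ a : OSAAction C, a.feasible Pc → a.ch = c →
      a.gain ≤ 1 - εs + K * (a.collision - ζ) := by
  have hεs0 : 0 ≤ εs := hf.1.1
  have hεsζ : εs ≤ 1 - ζ := hf.2.2.2.2.1
  have hPc0 := hdiag 0 ⟨le_rfl, zero_le_one⟩
  have hPc1 := hdiag 1 ⟨zero_le_one, le_rfl⟩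
  rcases hεs0.eq_or_lt with rfl | hεs
  · exact ⟨0, le_rfl, fun a ha _ => by simpa using a.gain_le_one ha⟩
  have hint : εs ∈ interior (Set.Icc (0 : ℝ) 1) := by
    rw [interior_Icc]; exact ⟨hεs, by linarith⟩
  obtain ⟨k, hk⟩ := hconc.exists_le_add_mul_sub hint
  have hroc := roc_le_of_optimal hconc hPc0 hεs hf hopt
  have hk1 := hk 1 ⟨zero_le_one, le_rfl⟩
  have hk0 := hk 0 ⟨le_rfl, zero_le_one⟩
  have hkpos : 0 < k := by nlinarith
  refine ⟨k⁻¹, inv_nonneg.2 hkpos.le, fun a ha hac => a.gain_le_of_roc_le ha (inv_nonneg.2 hkpos.le)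
    ((inv_mul_le_iff₀ hkpos).2 (by nlinarith)) ((le_inv_mul_iff₀ hkpos).2 (by nlinarith))
    ((inv_mul_le_iff₀ hkpos).2 ?_)⟩
  have := hk a.eps ha.1
  rw [hac]
  linarith

end Lagrangian

section SlotValue

variable {S C : Type*} (occ : S → C → ℝ)

def ackWeight (W : S → ℝ) (c : C) (γ : ℝ) : S → ℝ := fun s => W s * occ s c * γ

def nackWeight (W : S → ℝ) (c : C) (γ : ℝ) : S → ℝ := fun s => W s * (1 - occ s c * γ)

variable {occ}

lemma ackWeight_add (W₁ W₂ : S → ℝ) (c : C) (γ : ℝ) :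
    ackWeight occ (W₁ + W₂) c γ = ackWeight occ W₁ c γ + ackWeight occ W₂ c γ := by
  ext s; simp only [ackWeight, Pi.add_apply]; ring

lemma nackWeight_add (W₁ W₂ : S → ℝ) (c : C) (γ : ℝ) :
    nackWeight occ (W₁ + W₂) c γ = nackWeight occ W₁ c γ + nackWeight occ W₂ c γ := by
  ext s; simp only [nackWeight, Pi.add_apply]; ring

lemma ackWeight_smul (t : ℝ) (W : S → ℝ) (c : C) (γ : ℝ) :
    ackWeight occ (t • W) c γ = t • ackWeight occ W c γ := by
  ext s; simp only [ackWeight, Pi.smul_apply, smul_eq_mul]; ring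

lemma nackWeight_smul (t : ℝ) (W : S → ℝ) (c : C) (γ : ℝ) :
    nackWeight occ (t • W) c γ = t • nackWeight occ W c γ := by
  ext s; simp only [nackWeight, Pi.smul_apply, smul_eq_mul]; ring

lemma ackWeight_eq_smul (W : S → ℝ) (c : C) (γ : ℝ) :
    ackWeight occ W c γ = γ • ackWeight occ W c 1 := by
  ext s; simp only [ackWeight, Pi.smul_apply, smul_eq_mul]; ring

lemma nackWeight_eq_sub (W : S → ℝ) (c : C) (γ : ℝ) :
    nackWeight occ W c γ = W - ackWeight occ W c γ := by
  ext s; simp only [nackWeight, ackWeight, Pi.sub_apply]; ring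

lemma ackWeight_nonneg {W : S → ℝ} (hW : 0 ≤ W) (hocc : ∀ s c, occ s c ∈ Set.Icc (0 : ℝ) 1)
    (c : C) {γ : ℝ} (hγ : 0 ≤ γ) : 0 ≤ ackWeight occ W c γ :=
  fun s => mul_nonneg (mul_nonneg (hW s) (hocc s c).1) hγ

lemma nackWeight_nonneg {W : S → ℝ} (hW : 0 ≤ W) (hocc : ∀ s c, occ s c ∈ Set.Icc (0 : ℝ) 1)
    (c : C) {γ : ℝ} (hγ : γ ≤ 1) : 0 ≤ nackWeight occ W c γ := by
  intro s
  have : occ s c * γ ≤ 1 := by nlinarith [(hocc s c).1, (hocc s c).2]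
  exact mul_nonneg (hW s) (sub_nonneg.2 this)

variable [Fintype S] (occ) (B : C → ℝ)

noncomputable def slotValue (V₁ V₂ : (S → ℝ) → ℝ) (W : S → ℝ) (c : C) (γ : ℝ) : ℝ :=
  B c * ∑ s, ackWeight occ W c γ s + V₁ (ackWeight occ W c γ) + V₂ (nackWeight occ W c γ)

variable {occ B}

lemma slotValue_add {V₁ V₂ : (S → ℝ) → ℝ} (hV₁ : ∀ u v, V₁ (u + v) = V₁ u + V₁ v)
    (hV₂ : ∀ u v, V₂ (u + v) = V₂ u + V₂ v) (W₁ W₂ : S → ℝ) (c : C) (γ : ℝ) :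
    slotValue occ B V₁ V₂ (W₁ + W₂) c γ
      = slotValue occ B V₁ V₂ W₁ c γ + slotValue occ B V₁ V₂ W₂ c γ := by
  simp only [slotValue, ackWeight_add, nackWeight_add, hV₁, hV₂, Pi.add_apply, sum_add_distrib]
  ring

lemma slotValue_smul {V₁ V₂ : (S → ℝ) → ℝ} {t : ℝ} (hV₁ : ∀ u, V₁ (t • u) = t * V₁ u)
    (hV₂ : ∀ u, V₂ (t • u) = t * V₂ u) (W : S → ℝ) (c : C) (γ : ℝ) :
    slotValue occ B V₁ V₂ (t • W) c γ = t * slotValue occ B V₁ V₂ W c γ := by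
  simp only [slotValue, ackWeight_smul, nackWeight_smul, hV₁, hV₂, Pi.smul_apply, smul_eq_mul,
    ← mul_sum]
  ring

lemma slotValue_linearMap (E₁ E₂ : (S → ℝ) →ₗ[ℝ] ℝ) (W : S → ℝ) (c : C) (γ : ℝ) :
    slotValue occ B E₁ E₂ W c γ
      = E₂ W + γ * (B c * ∑ s, ackWeight occ W c 1 s + E₁ (ackWeight occ W c 1)
          - E₂ (ackWeight occ W c 1)) := by
  rw [slotValue, nackWeight_eq_sub, ackWeight_eq_smul W c γ]
  simp only [map_sub, map_smul, Pi.smul_apply, smul_eq_mul, ← mul_sum]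
  ring

end SlotValue

section Linearity

variable {S C R : Type*} [Fintype S] [Fintype C] [Fintype R]
  (P : S → S → ℝ) (occ : S → C → ℝ) (B : C → ℝ)
  (π : ℕ → List Bool → R → OSAAction C) (pr : ℕ → List Bool → R → ℝ)

lemma evalOSA_succ (m : ℕ) (h : List Bool) (w : S → ℝ) :
    evalOSA P occ B π pr (m + 1) h w
      = ∑ r, pr (m + 1) h r * slotValue occ B (evalOSA P occ B π pr m (h ++ [true]))
          (evalOSA P occ B π pr m (h ++ [false])) (w ᵥ* of P) (π (m + 1) h r).ch
          (π (m + 1) h r).gain := rfl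

lemma evalOSA_add :
    ∀ (m : ℕ) (h : List Bool) (w₁ w₂ : S → ℝ),
      evalOSA P occ B π pr m h (w₁ + w₂) = evalOSA P occ B π pr m h w₁ + evalOSA P occ B π pr m h w₂
  | 0, _, _, _ => by simp [evalOSA]
  | m + 1, h, w₁, w₂ => by
    simp only [evalOSA_succ, add_vecMul, slotValue_add (evalOSA_add m _) (evalOSA_add m _),
      mul_add, sum_add_distrib]

lemma evalOSA_smul :
    ∀ (m : ℕ) (h : List Bool) (t : ℝ) (w : S → ℝ),
      evalOSA P occ B π pr m h (t • w) = t * evalOSA P occ B π pr m h w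
  | 0, _, _, _ => by simp [evalOSA]
  | m + 1, h, t, w => by
    simp only [evalOSA_succ, smul_vecMul, slotValue_smul (evalOSA_smul m _ t) (evalOSA_smul m _ t),
      mul_sum]
    exact sum_congr rfl fun r _ => by ring

noncomputable def evalOSALinearMap (m : ℕ) (h : List Bool) : (S → ℝ) →ₗ[ℝ] ℝ where
  toFun := evalOSA P occ B π pr m h
  map_add' := evalOSA_add P occ B π pr m h
  map_smul' := evalOSA_smul P occ B π pr m h

end Linearity

section OptValue

variable {S C : Type*} [Fintype S] [Fintype C] [Nonempty C]
  (P : S → S → ℝ) (occ : S → C → ℝ) (B : C → ℝ) (g : C → ℝ)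

/-- Bellman value of the sensing problem in which channel `c` is always accessed with
probability `g c` when idle. -/
noncomputable def optValue : ℕ → (S → ℝ) → ℝ
  | 0, _ => 0
  | m + 1, w => univ.sup' univ_nonempty fun c =>
      slotValue occ B (optValue m) (optValue m) (w ᵥ* of P) c (g c)

lemma optValue_succ (m : ℕ) (w : S → ℝ) :
    optValue P occ B g (m + 1) w = univ.sup' univ_nonempty fun c =>
      slotValue occ B (optValue P occ B g m) (optValue P occ B g m) (w ᵥ* of P) c (g c) := rfl

lemma optValue_smul {t : ℝ} (ht : 0 ≤ t) :
    ∀ (m : ℕ) (w : S → ℝ), optValue P occ B g m (t • w) = t * optValue P occ B g m w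
  | 0, _ => by simp [optValue]
  | m + 1, w => by
    simp only [optValue_succ, mul₀_sup' ht, smul_vecMul,
      slotValue_smul (optValue_smul ht m) (optValue_smul ht m)]

end OptValue

section Domination

variable {S C R : Type*} [Fintype S] [Fintype C] [Nonempty C] [DecidableEq C] [Fintype R]
  {P : S → S → ℝ} {occ : S → C → ℝ} {B : C → ℝ} {g : C → ℝ}

theorem sum_slotValue_le_sup' (E₁ E₂ : (S → ℝ) →ₗ[ℝ] ℝ) {V : (S → ℝ) → ℝ}
    (hE₁ : ∀ u, 0 ≤ u → E₁ u ≤ V u) (hE₂ : ∀ u, 0 ≤ u → E₂ u ≤ V u)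
    (hV : ∀ c u, V (g c • u) = g c * V u) (hB : ∀ c, 0 ≤ B c)
    (hocc : ∀ s c, occ s c ∈ Set.Icc (0 : ℝ) 1) (hg : ∀ c, g c ∈ Set.Icc (0 : ℝ) 1)
    {W : S → ℝ} (hW : 0 ≤ W) {q : R → ℝ} (hq : ∀ r, 0 ≤ q r) (hq1 : ∑ r, q r = 1)
    (a : R → C) {γ : R → ℝ} (hγ : ∀ r, 0 ≤ γ r)
    (hmix : ∀ c, ∑ r with a r = c, q r * γ r ≤ g c * ∑ r with a r = c, q r) :
    ∑ r, q r * slotValue occ B E₁ E₂ W (a r) (γ r)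
      ≤ univ.sup' univ_nonempty fun c => slotValue occ B V V W c (g c) := by
  set Q := fun c => slotValue occ B V V W c (g c)
  set u := fun c => ackWeight occ W c 1
  set Z := fun c => B c * ∑ s, u c s + E₁ (u c) - E₂ (u c)
  set p := fun c => ∑ r with a r = c, q r
  set y := fun c => ∑ r with a r = c, q r * γ r
  -- By `slotValue_linearMap` the fibre of `c` only sees the mean access probability
  -- `y c / p c ≤ g c`; the gap `p c * g c - y c` is charged to the no-acknowledgement branch.
  have hchannel : ∀ c, p c * E₂ W + y c * Z c ≤ p c * Q c := by
    intro c
    have hp : 0 ≤ p c := sum_nonneg fun r _ => hq r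
    have hy : 0 ≤ y c := sum_nonneg fun r _ => mul_nonneg (hq r) (hγ r)
    have hu : 0 ≤ u c := ackWeight_nonneg hW hocc c zero_le_one
    have hn : 0 ≤ nackWeight occ W c (g c) := nackWeight_nonneg hW hocc c (hg c).2
    have hsplit : E₂ W = E₂ (nackWeight occ W c (g c)) + g c * E₂ (u c) := by
      rw [nackWeight_eq_sub, ackWeight_eq_smul, map_sub, map_smul, smul_eq_mul]
      ring
    have hQ : Q c = g c * (B c * ∑ s, u c s) + g c * V (u c) + V (nackWeight occ W c (g c)) := by
      simp only [Q, slotValue, ackWeight_eq_smul W c (g c), hV, Pi.smul_apply, smul_eq_mul,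
        ← mul_sum, u]
      ring
    have hyp : y c ≤ p c * g c := (hmix c).trans_eq (mul_comm _ _)
    have hBu : 0 ≤ B c * ∑ s, u c s := mul_nonneg (hB c) (sum_nonneg fun s _ => hu s)
    have h₁ := mul_le_mul_of_nonneg_left (hE₂ _ hn) hp
    have h₂ := mul_le_mul_of_nonneg_left (hE₂ _ hu) (sub_nonneg.2 hyp)
    have h₃ := mul_le_mul_of_nonneg_left (hE₁ _ hu) hy
    have h₄ := mul_le_mul_of_nonneg_right hyp hBu
    rw [hsplit, hQ]
    simp only [Z]
    linarith
  have hp1 : ∑ c, p c = 1 := by rw [sum_fiberwise univ a q, hq1]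
  calc ∑ r, q r * slotValue occ B E₁ E₂ W (a r) (γ r)
      = ∑ r, (q r * E₂ W + q r * γ r * Z (a r)) := by
        simp only [slotValue_linearMap, Z, u]
        exact sum_congr rfl fun r _ => by ring
    _ = ∑ c, (p c * E₂ W + y c * Z c) := by
        rw [← sum_fiberwise univ a]
        refine sum_congr rfl fun c _ => ?_
        rw [sum_add_distrib, sum_mul, sum_mul]
        congr 1
        exact sum_congr rfl fun r hr => by rw [(mem_filter.1 hr).2]
    _ ≤ ∑ c, p c * Q c := sum_le_sum fun c _ => hchannel c
    _ ≤ ∑ c, p c * univ.sup' univ_nonempty Q :=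
        sum_le_sum fun c _ => mul_le_mul_of_nonneg_left (le_sup' Q (mem_univ c))
          (sum_nonneg fun r _ => hq r)
    _ = univ.sup' univ_nonempty Q := by rw [← sum_mul, hp1, one_mul]

theorem evalOSA_le_optValue (hP : ∀ s s', 0 ≤ P s s') (hocc : ∀ s c, occ s c ∈ Set.Icc (0 : ℝ) 1)
    (hB : ∀ c, 0 ≤ B c) (hg : ∀ c, g c ∈ Set.Icc (0 : ℝ) 1) {π : ℕ → List Bool → R → OSAAction C}
    {pr : ℕ → List Bool → R → ℝ} (hpr : ∀ m h, (∀ r, 0 ≤ pr m h r) ∧ ∑ r, pr m h r = 1)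
    (hgain : ∀ m h r, 0 ≤ (π m h r).gain)
    (hmix : ∀ m h c, ∑ r with (π m h r).ch = c, pr m h r * (π m h r).gain
      ≤ g c * ∑ r with (π m h r).ch = c, pr m h r) :
    ∀ (m : ℕ) (h : List Bool) (w : S → ℝ), 0 ≤ w →
      evalOSA P occ B π pr m h w ≤ optValue P occ B g m w
  | 0, _, _, _ => by simp [evalOSA, optValue]
  | m + 1, h, w, hw => by
    rw [evalOSA_succ, optValue_succ]
    exact sum_slotValue_le_sup' (evalOSALinearMap P occ B π pr m (h ++ [true]))
      (evalOSALinearMap P occ B π pr m (h ++ [false]))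
      (evalOSA_le_optValue hP hocc hB hg hpr hgain hmix m _)
      (evalOSA_le_optValue hP hocc hB hg hpr hgain hmix m _)
      (fun c => optValue_smul P occ B g (hg c).1 m) hB hocc hg
      (fun s => dotProduct_nonneg_of_nonneg hw fun s' => hP s' s) (hpr (m + 1) h).1
      (hpr (m + 1) h).2 _ (hgain (m + 1) h) (hmix (m + 1) h)

end Domination

section OptPolicy

variable {S C : Type*} [Fintype S] [Fintype C] [Nonempty C]
  (P : S → S → ℝ) (occ : S → C → ℝ) (B : C → ℝ) (g : C → ℝ) (Λ0 : S → ℝ)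

noncomputable def bestChannel (m : ℕ) (w : S → ℝ) : C :=
  (exists_max_image univ (fun c => slotValue occ B (optValue P occ B g m)
    (optValue P occ B g m) (w ᵥ* of P) c (g c)) univ_nonempty).choose

lemma optValue_succ_eq_bestChannel (m : ℕ) (w : S → ℝ) :
    optValue P occ B g (m + 1) w
      = slotValue occ B (optValue P occ B g m) (optValue P occ B g m) (w ᵥ* of P)
          (bestChannel P occ B g m w) (g (bestChannel P occ B g m w)) := by
  set f := fun c =>
    slotValue occ B (optValue P occ B g m) (optValue P occ B g m) (w ᵥ* of P) c (g c)
  have hmax := (exists_max_image univ f univ_nonempty).choose_spec.2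
  rw [optValue_succ]
  exact le_antisymm (sup'_le _ _ fun c _ => hmax c (mem_univ c)) (le_sup' f (mem_univ _))

/-- The weight reached by the optimal policy, indexed by the remaining horizon and the
observation history with the latest observation first. -/
noncomputable def optWeight : ℕ → List Bool → S → ℝ
  | _, [] => Λ0
  | m, b :: l =>
    let c := bestChannel P occ B g m (optWeight (m + 1) l)
    (if b then ackWeight else nackWeight) occ (optWeight (m + 1) l ᵥ* of P) c (g c)

-- At `m = 0` no channel is sensed any more, so the truncation `0 - 1 = 0` is harmless.
noncomputable def optPolicy (m : ℕ) (h : List Bool) : C :=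
  bestChannel P occ B g (m - 1) (optWeight P occ B g Λ0 m h.reverse)

theorem evalOSA_optPolicy (act : C → OSAAction C) (hch : ∀ c, (act c).ch = c)
    (hgain : ∀ c, (act c).gain = g c) :
    ∀ (m : ℕ) (h : List Bool),
      evalOSA (R := Unit) P occ B (fun m h _ => act (optPolicy P occ B g Λ0 m h))
          (fun _ _ _ => 1) m h (optWeight P occ B g Λ0 m h.reverse)
        = optValue P occ B g m (optWeight P occ B g Λ0 m h.reverse)
  | 0, _ => rfl
  | m + 1, h => by
    have hack := evalOSA_optPolicy act hch hgain m (h ++ [true])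
    have hnack := evalOSA_optPolicy act hch hgain m (h ++ [false])
    simp only [List.reverse_append, List.reverse_cons, List.reverse_nil, List.nil_append,
      List.cons_append, optWeight, if_true, Bool.false_eq_true, if_false] at hack hnack
    have hbest : optPolicy P occ B g Λ0 (m + 1) h
        = bestChannel P occ B g m (optWeight P occ B g Λ0 (m + 1) h.reverse) := rfl
    rw [evalOSA_succ, optValue_succ_eq_bestChannel, Fintype.sum_unique, one_mul, hch, hgain, hbest]
    simp only [slotValue, hack, hnack]

end OptPolicy

theorem separation_principle_general
    {S C : Type*} [Fintype S] [Fintype C] [Nonempty C] [DecidableEq C]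
    (P : S → S → ℝ) (hP0 : ∀ s s', 0 ≤ P s s')
    (occ : S → C → ℝ) (hocc : ∀ s c, occ s c = 0 ∨ occ s c = 1)
    (B : C → ℝ) (hB : ∀ c, 0 ≤ B c)
    (Λ0 : S → ℝ) (hΛ0 : ∀ s, 0 ≤ Λ0 s)
    (Pc : C → ℝ → ℝ)
    (hPc : ∀ c, ConcaveOn ℝ (Set.Icc (0:ℝ) 1) (Pc c) ∧
      MonotoneOn (Pc c) (Set.Icc (0:ℝ) 1) ∧
      ∀ ε ∈ Set.Icc (0:ℝ) 1, ε ≤ Pc c ε ∧ Pc c ε ≤ 1)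
    (ζ : ℝ) (hζ : ζ ∈ Set.Ioo (0:ℝ) 1)
    (εstar : C → ℝ)
    (hfeas : ∀ c : C, OSAAction.feasible Pc ⟨c, εstar c, ζ, 0, 1⟩)
    (hopt : ∀ a : OSAAction C, a.feasible Pc → a.collision ≤ ζ →
      a.gain ≤ 1 - εstar a.ch)
    (T : ℕ) :
    ∃ σ : ℕ → List Bool → C,
      (∀ m h, (OSAAction.feasible Pc ⟨σ m h, εstar (σ m h), ζ, 0, 1⟩ ∧
        OSAAction.collision (C := C) ⟨σ m h, εstar (σ m h), ζ, 0, 1⟩ ≤ ζ)) ∧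
      ∀ (R : Type) (_ : Fintype R)
        (π : ℕ → List Bool → R → OSAAction C) (pr : ℕ → List Bool → R → ℝ),
        (∀ m h, (∀ r, 0 ≤ pr m h r) ∧ ∑ r, pr m h r = 1) →
        (∀ m h r, (π m h r).feasible Pc) →
        -- conditional collision probability ≤ ζ on every channel, slot, history:
        (∀ m h (c : C),
          (∑ r, if (π m h r).ch = c then pr m h r * (π m h r).collision else 0)
            ≤ ζ * ∑ r, if (π m h r).ch = c then pr m h r else 0) →
        evalOSA P occ B π pr T [] Λ0 ≤
          evalOSA (R := Unit) P occ B
            (fun m h _ => ⟨σ m h, εstar (σ m h), ζ, 0, 1⟩)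
            (fun _ _ _ => 1) T [] Λ0 := by
  set g : C → ℝ := fun c => 1 - εstar c
  have hg : ∀ c, g c ∈ Set.Icc (0 : ℝ) 1 := fun c =>
    ⟨sub_nonneg.2 (hfeas c).1.2, sub_le_self _ (hfeas c).1.1⟩
  have hocc' : ∀ s c, occ s c ∈ Set.Icc (0 : ℝ) 1 := fun s c => by
    rcases hocc s c with h | h <;> simp [h]
  choose K hK0 hK using fun c => exists_gain_le_add_mul_collision (hPc c).1
    (fun ε hε => ((hPc c).2.2 ε hε).1) hζ.1 (hfeas c) fun a ha hac => hac ▸ hopt a ha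
  refine ⟨optPolicy P occ B g Λ0, fun m h => ⟨hfeas _, by simp [OSAAction.collision]⟩, ?_⟩
  intro R _ π pr hpr hπ hcoll
  have hmix : ∀ m h c, ∑ r with (π m h r).ch = c, pr m h r * (π m h r).gain
      ≤ g c * ∑ r with (π m h r).ch = c, pr m h r := fun m h c =>
    sum_mul_le_of_le_add_mul _ (fun r _ => (hpr m h).1 r) (hK0 c)
      (fun r hr => hK c _ (hπ m h r) (mem_filter.1 hr).2)
      (by simpa only [sum_filter] using hcoll m h c)
  calc evalOSA P occ B π pr T [] Λ0 ≤ optValue P occ B g T Λ0 :=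
        evalOSA_le_optValue hP0 hocc' hB hg hpr (fun m h r => OSAAction.gain_nonneg (hπ m h r))
          hmix T [] Λ0 hΛ0
    _ = _ := (evalOSA_optPolicy P occ B g Λ0 (fun c => ⟨c, εstar c, ζ, 0, 1⟩) (fun _ => rfl)
        (fun c => by simp [OSAAction.gain, g]) T []).symm

/-- **Theorem 1: the separation principle for OSA with single-channel sensing.**
Suppose for every channel `c` the pair `(εstar c, ζ)` maximizes the
instantaneous throughput `ε f₀ + (1-ε) f₁` over all feasible operating points
and access probabilities satisfying the per-slot collision constraint
`(1-δ) f₀ + δ f₁ ≤ ζ` (with the maximum value `1 - εstar c`, achieved by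
`(f₀, f₁) = (0, 1)`).  Then some deterministic sensing (channel-selection)
policy `σ`, combined in every slot with the myopic design
`(εstar, ζ, 0, 1)` — which itself satisfies the collision constraint —
achieves at least the total expected reward of every randomized
history-dependent joint policy satisfying the collision constraint on every
channel and slot. -/
theorem separation_principle
    {S C : Type*} [Fintype S] [Fintype C] [Nonempty C] [DecidableEq C]
    (P : S → S → ℝ) (hP0 : ∀ s s', 0 ≤ P s s') (hP1 : ∀ s, ∑ s', P s s' = 1)
    (occ : S → C → ℝ) (hocc : ∀ s c, occ s c = 0 ∨ occ s c = 1)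
    (B : C → ℝ) (hB : ∀ c, 0 ≤ B c)
    (Λ0 : S → ℝ) (hΛ0 : ∀ s, 0 ≤ Λ0 s) (hΛ1 : ∑ s, Λ0 s = 1)
    (Pc : C → ℝ → ℝ)
    (hPc : ∀ c, ConcaveOn ℝ (Set.Icc (0:ℝ) 1) (Pc c) ∧
      MonotoneOn (Pc c) (Set.Icc (0:ℝ) 1) ∧
      ∀ ε ∈ Set.Icc (0:ℝ) 1, ε ≤ Pc c ε ∧ Pc c ε ≤ 1)
    (ζ : ℝ) (hζ : ζ ∈ Set.Ioo (0:ℝ) 1)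
    (εstar : C → ℝ)
    (hfeas : ∀ c : C, OSAAction.feasible Pc ⟨c, εstar c, ζ, 0, 1⟩)
    (hopt : ∀ a : OSAAction C, a.feasible Pc → a.collision ≤ ζ →
      a.gain ≤ 1 - εstar a.ch)
    (T : ℕ) :
    ∃ σ : ℕ → List Bool → C,
      (∀ m h, (OSAAction.feasible Pc ⟨σ m h, εstar (σ m h), ζ, 0, 1⟩ ∧
        OSAAction.collision (C := C) ⟨σ m h, εstar (σ m h), ζ, 0, 1⟩ ≤ ζ)) ∧
      ∀ (R : Type) (_ : Fintype R)
        (π : ℕ → List Bool → R → OSAAction C) (pr : ℕ → List Bool → R → ℝ),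
        (∀ m h, (∀ r, 0 ≤ pr m h r) ∧ ∑ r, pr m h r = 1) →
        (∀ m h r, (π m h r).feasible Pc) →
        -- conditional collision probability ≤ ζ on every channel, slot, history:
        (∀ m h (c : C),
          (∑ r, if (π m h r).ch = c then pr m h r * (π m h r).collision else 0)
            ≤ ζ * ∑ r, if (π m h r).ch = c then pr m h r else 0) →
        evalOSA P occ B π pr T [] Λ0 ≤
          evalOSA (R := Unit) P occ B
            (fun m h _ => ⟨σ m h, εstar (σ m h), ζ, 0, 1⟩)
            (fun _ _ _ => 1) T [] Λ0 :=
  separation_principle_general P hP0 occ hocc B hB Λ0 hΛ0 Pc hPc ζ hζ εstar hfeas hopt T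
end
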